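/- arXiv:2305.06503 — 5 statements merged into one kernel-verified Lean document; each statement's English description precedes it below -/
import Mathlib

section
/- Let G be a graph whose vertex set is covered by two sets S1 and S2 with S1 ∩ S2 = {u, v} for distinct vertices u and v, such that every edge of G joins two vertices of S1 or two vertices of S2, and such that the induced subgraphs G1' = G[S1] and G2' = G[S2] are connected and have more than two vertices. For i = 1, 2, let G_i be G_i' together with the edge uv added if uv is not an edge of G_i'. Then G is bicritical if and only if both G1 and G2 are bicritical. -/
/-- A graph `G` (on at least four vertices) is *bicritical* if for every pair of distinct
vertices `u, v`, the graph `G − {u, v}` has a perfect matching, i.e. there is a matching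
subgraph of `G` whose vertex set is exactly the complement of `{u, v}`. -/
def Bicritical {V : Type*} (G : SimpleGraph V) : Prop :=
  4 ≤ Nat.card V ∧ ∀ u v : V, u ≠ v →
    ∃ M : G.Subgraph, M.IsMatching ∧ M.verts = ({u, v}ᶜ : Set V)

/-- A bicritical graph is *minimal* if deleting any edge destroys bicriticality. -/
def MinimalBicritical {V : Type*} (G : SimpleGraph V) : Prop :=
  Bicritical G ∧ ∀ e ∈ G.edgeSet, ¬ Bicritical (G.deleteEdges {e})

/-- A connected graph with at least two vertices is *matching covered* if every edge
lies in a perfect matching. -/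
def MatchingCovered {V : Type*} (G : SimpleGraph V) : Prop :=
  2 ≤ Nat.card V ∧ G.Connected ∧
    ∀ e ∈ G.edgeSet, ∃ M : G.Subgraph, M.IsPerfectMatching ∧ e ∈ M.edgeSet

/-- A graph is *3-connected* if it has more than three vertices and removing any set of
fewer than three vertices leaves a connected graph. -/
def ThreeConnected {V : Type*} (G : SimpleGraph V) : Prop :=
  3 < Nat.card V ∧ ∀ X : Set V, X.ncard < 3 → (G.induce (Xᶜ : Set V)).Connected

/-- A *brick* is a 3-connected bicritical graph. -/
def IsBrick {V : Type*} (G : SimpleGraph V) : Prop :=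
  ThreeConnected G ∧ Bicritical G

/-- A brick is *minimal* if deleting any edge yields a graph that is not a brick. -/
def MinimalBrick {V : Type*} (G : SimpleGraph V) : Prop :=
  IsBrick G ∧ ∀ e ∈ G.edgeSet, ¬ IsBrick (G.deleteEdges {e})

/-- `{u, v}` is a *2-vertex cut* of `G`: `u ≠ v` and `G − {u, v}` is disconnected. -/
def IsTwoCut {V : Type*} (G : SimpleGraph V) (u v : V) : Prop :=
  u ≠ v ∧ ¬ (G.induce ({u, v}ᶜ : Set V)).Connected

/-- The set of *deletable* edges of a bicritical graph: those edges whose deletion leaves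
a bicritical graph. -/
def DeletableEdges {V : Type*} (G : SimpleGraph V) : Set (Sym2 V) :=
  {e | e ∈ G.edgeSet ∧ Bicritical (G.deleteEdges {e})}

section Aux
set_option linter.unusedSectionVars false
set_option linter.unusedVariables false
variable {V : Type*}
open Set
open scoped Classical

open scoped Classical

variable {V : Type*}

/-- A pairing on a set `T`: an involution matching each element of `T` to a `G`-neighbor in `T`. -/
def IsPairingOn (G : SimpleGraph V) (T : Set V) (f : V → V) : Prop :=
  ∀ a ∈ T, f a ∈ T ∧ f (f a) = a ∧ G.Adj a (f a)

lemma IsPairingOn.toMatching {G : SimpleGraph V} {T : Set V} {f : V → V}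
    (hf : IsPairingOn G T f) :
    ∃ M : G.Subgraph, M.IsMatching ∧ M.verts = T := by
  refine ⟨⟨T, fun a b => a ∈ T ∧ b ∈ T ∧ f a = b ∧ f b = a, ?_, ?_, ?_⟩, ?_, rfl⟩
  · rintro a b ⟨ha, hb, hab, hba⟩
    exact hab ▸ (hf a ha).2.2
  · rintro a b ⟨ha, _⟩; exact ha
  · constructor; rintro a b ⟨ha, hb, hab, hba⟩; exact ⟨hb, ha, hba, hab⟩
  · intro a ha
    refine ⟨f a, ⟨ha, (hf a ha).1, rfl, (hf a ha).2.1⟩, ?_⟩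
    rintro b ⟨_, _, hab, _⟩; exact hab.symm

lemma matching_toPairing {G : SimpleGraph V} {M : G.Subgraph} (hM : M.IsMatching) :
    ∃ f : V → V, IsPairingOn G M.verts f := by
  classical
  refine ⟨fun a => if h : a ∈ M.verts then (hM h).exists.choose else a, ?_⟩
  intro a ha
  have hadj : M.Adj a ((hM ha).exists.choose) := (hM ha).exists.choose_spec
  have hfa : (hM ha).exists.choose ∈ M.verts := M.edge_vert hadj.symm
  simp only [dif_pos ha, dif_pos hfa]
  refine ⟨hfa, ?_, M.adj_sub (by simpa [dif_pos ha] using hadj)⟩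
  have hadj2 : M.Adj ((hM ha).exists.choose) ((hM hfa).exists.choose) :=
    (hM hfa).exists.choose_spec
  exact (hM hfa).unique hadj2 hadj.symm

lemma IsPairingOn.even_ncard [Fintype V] {G : SimpleGraph V} {T : Set V} {f : V → V}
    (hf : IsPairingOn G T f) : Even T.ncard := by
  classical
  obtain ⟨M, hM, hMv⟩ := hf.toMatching
  have : Fintype M.verts := by rw [hMv]; infer_instance
  have h := hM.even_card
  subst hMv
  rwa [Set.ncard_eq_toFinset_card']

lemma IsPairingOn.restrict {G : SimpleGraph V} {T : Set V} {f : V → V}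
    (hf : IsPairingOn G T f) (C : Set V) :
    IsPairingOn G {a ∈ T ∩ C | f a ∈ C} f := by
  rintro a ⟨⟨haT, haC⟩, hfaC⟩
  obtain ⟨h1, h2, h3⟩ := hf a haT
  exact ⟨⟨⟨h1, hfaC⟩, h2.symm ▸ haC⟩, h2, h3⟩

lemma IsPairingOn.union {G : SimpleGraph V} {P Q : Set V} {f g : V → V}
    (hf : IsPairingOn G P f) (hg : IsPairingOn G Q g) (hdisj : Disjoint P Q) :
    IsPairingOn G (P ∪ Q) (fun a => if a ∈ P then f a else g a) := by
  classical
  intro a ha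
  rcases ha with ha | ha
  · obtain ⟨h1, h2, h3⟩ := hf a ha
    simp only [if_pos ha, if_pos h1]
    exact ⟨Or.inl h1, h2, h3⟩
  · obtain ⟨h1, h2, h3⟩ := hg a ha
    have haP : a ∉ P := fun h => hdisj.ne_of_mem h ha rfl
    have hgaP : g a ∉ P := fun h => hdisj.ne_of_mem h h1 rfl
    simp only [if_neg haP, if_neg hgaP]
    exact ⟨Or.inr h1, h2, h3⟩

section Helpers

variable {G : SimpleGraph V} {S : Set V} {u' v' : ↥S}

lemma sup_edge_adj_of_adj {a b : ↥S} (h : G.Adj ↑a ↑b) :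
    (G.induce S ⊔ SimpleGraph.edge u' v').Adj a b := by
  left; simpa using h

lemma sup_edge_adj_pair (h : u' ≠ v') :
    (G.induce S ⊔ SimpleGraph.edge u' v').Adj u' v' := by
  right; rw [SimpleGraph.edge_adj]; exact ⟨Or.inl ⟨rfl, rfl⟩, h⟩

lemma sup_edge_adj_elim {a b : ↥S} (h : (G.induce S ⊔ SimpleGraph.edge u' v').Adj a b) :
    G.Adj ↑a ↑b ∨ ((a = u' ∧ b = v') ∨ (a = v' ∧ b = u')) := by
  rcases h with h | h
  · left; simpa using h
  · right; rw [SimpleGraph.edge_adj] at h; exact h.1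

/-- Lift a subtype-level pairing (with `G`-adjacency) to a `V`-level pairing on the image. -/
lemma lift_pairing {g : ↥S → ↥S} {W : Set ↥S}
    (hg : ∀ a ∈ W, g a ∈ W ∧ g (g a) = a ∧ G.Adj ↑a ↑(g a)) :
    IsPairingOn G (Subtype.val '' W) (fun a => if hs : a ∈ S then ↑(g ⟨a, hs⟩) else a) := by
  rintro a ⟨a', ha', rfl⟩
  obtain ⟨h1, h2, h3⟩ := hg a' ha'
  have e1 : (⟨↑a', a'.2⟩ : ↥S) = a' := rfl
  simp only [dif_pos a'.2, dif_pos (g a').2, e1]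
  refine ⟨⟨g a', h1, rfl⟩, ?_, h3⟩
  have e2 : (⟨↑(g a'), (g a').2⟩ : ↥S) = g a' := rfl
  rw [e2, h2]

end Helpers

section Main

variable [Fintype V] {G : SimpleGraph V} {S T : Set V} {u v : V}

lemma forward_piece (huv : u ≠ v) (hcover : S ∪ T = Set.univ) (hinter : S ∩ T = {u, v})
    (huS : u ∈ S) (hvS : v ∈ S)
    (hedges : ∀ a b : V, G.Adj a b → (a ∈ S ∧ b ∈ S) ∨ (a ∈ T ∧ b ∈ T))
    (hcardS : 2 < Nat.card S)
    (hG : Bicritical G) :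
    Bicritical (G.induce S ⊔ SimpleGraph.edge (⟨u, huS⟩ : S) (⟨v, hvS⟩ : S)) := by
  classical
  have memST : ∀ a : V, a ∈ S ∨ a ∈ T := fun a => by
    have : a ∈ S ∪ T := hcover.symm ▸ Set.mem_univ a
    exact this
  have memUV : ∀ a : V, a ∈ S → a ∈ T → a = u ∨ a = v := fun a h1 h2 => by
    have : a ∈ S ∩ T := ⟨h1, h2⟩
    rw [hinter] at this; exact this
  have adjS : ∀ a b : V, a ∉ T → G.Adj a b → b ∈ S := fun a b ha h =>
    ((hedges a b h).resolve_right (fun hh => ha hh.1)).2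
  have adjT : ∀ a b : V, a ∉ S → G.Adj a b → b ∈ T := fun a b ha h =>
    ((hedges a b h).resolve_left (fun hh => ha hh.1)).2
  set B : Set V := T \ {u, v} with hB
  have hBS : ∀ a ∈ B, a ∉ S := fun a ha hS =>
    ha.2 (by rcases memUV a hS ha.1 with rfl | rfl <;> simp)
  have hSnotT : ∀ a : V, a ∈ S → a ∉ ({u, v} : Set V) → a ∉ T := fun a h1 h2 ht =>
    h2 (by rcases memUV a h1 ht with rfl | rfl <;> simp)
  -- even cardinality of restricted sides
  have evenside : ∀ (x y : V), x ≠ y → ∀ (C : Set V), C ∩ ({x, y} : Set V) = ∅ →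
      (∀ (f : V → V), IsPairingOn G ({x, y}ᶜ) f → ∀ a ∈ C, f a ∈ C) → Even C.ncard := by
    intro x y hxy C hC hstab
    obtain ⟨M, hM, hMv⟩ := hG.2 x y hxy
    obtain ⟨f, hf⟩ := matching_toPairing hM
    rw [hMv] at hf
    have : {a ∈ ({x, y}ᶜ : Set V) ∩ C | f a ∈ C} = C := by
      ext a
      constructor
      · rintro ⟨⟨-, h2⟩, -⟩; exact h2
      · intro ha
        have haC : a ∈ ({x, y}ᶜ : Set V) := fun hmem => by
          have : C ∩ ({x, y} : Set V) ≠ ∅ := Set.nonempty_iff_ne_empty.mp ⟨a, ha, hmem⟩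
          exact this hC
        exact ⟨⟨haC, ha⟩, hstab f hf a ha⟩
    have h := (hf.restrict C).even_ncard
    rwa [this] at h
  -- B is stable under any pairing avoiding u,v-deleted pairs... B side stability:
  have evenB : Even B.ncard := by
    refine evenside u v huv B ?_ ?_
    · ext a; simp only [Set.mem_inter_iff, Set.mem_empty_iff_false, iff_false, not_and]
      exact fun ha => ha.2
    · intro f hf a ha
      obtain ⟨h1, -, h3⟩ := hf a (fun hm => ha.2 hm)
      exact ⟨adjT a (f a) (hBS a ha) h3, h1⟩
  have evenA : Even (S \ {u, v}).ncard := by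
    refine evenside u v huv (S \ {u, v}) ?_ ?_
    · ext a; simp only [Set.mem_inter_iff, Set.mem_empty_iff_false, iff_false, not_and]
      exact fun ha => ha.2
    · intro f hf a ha
      obtain ⟨h1, -, h3⟩ := hf a ha.2
      exact ⟨adjS a (f a) (hSnotT a ha.1 ha.2) h3, h1⟩
  have hcardS' : 2 < S.ncard := by rwa [Nat.card_coe_set_eq] at hcardS
  have hsub : ({u, v} : Set V) ⊆ S := by rintro w (rfl | rfl); exacts [huS, hvS]
  have hdiffcard : (S \ {u, v}).ncard = S.ncard - 2 := by
    rw [Set.ncard_diff hsub, Set.ncard_pair huv]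
  have hScard4 : 4 ≤ S.ncard := by
    obtain ⟨k, hk⟩ := evenA
    omega
  -- the key parity dichotomy
  have key : ∀ (x y : V), x ∈ S → y ∈ S → x ≠ y → ∀ (f : V → V), IsPairingOn G ({x, y}ᶜ) f →
      (∀ w, w ∈ ({u, v} : Set V) → w ∉ ({x, y} : Set V) → f w ∉ B) ∨
      (u ∉ ({x, y} : Set V) ∧ v ∉ ({x, y} : Set V) ∧ f u ∈ B ∧ f v ∈ B) := by
    intro x y hxS hyS hxy f hf
    set B2 : Set V := {a ∈ B | f a ∈ B} with hB2
    set T' : Set V := {w | w ∈ ({u, v} : Set V) ∧ w ∉ ({x, y} : Set V) ∧ f w ∈ B} with hT'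
    have hBxy : ∀ a ∈ B, a ∉ ({x, y} : Set V) := by
      rintro a ha (rfl | rfl)
      exacts [hBS a ha hxS, hBS a ha hyS]
    have evenB2 : Even B2.ncard := by
      have h := (hf.restrict B).even_ncard
      have : {a ∈ ({x, y}ᶜ : Set V) ∩ B | f a ∈ B} = B2 := by
        ext a
        constructor
        · rintro ⟨⟨-, h2⟩, h3⟩; exact ⟨h2, h3⟩
        · rintro ⟨h2, h3⟩; exact ⟨⟨hBxy a h2, h2⟩, h3⟩
      rwa [this] at h
    have hDpair : IsPairingOn G ((B \ B2) ∪ T') f := by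
      intro a ha
      rcases ha with ⟨haB, haB2⟩ | ⟨hauv, haxy, hafB⟩
      · obtain ⟨h1, h2, h3⟩ := hf a (hBxy a haB)
        have hfaT : f a ∈ T := adjT a (f a) (hBS a haB) h3
        have hfaB : f a ∉ B := fun hb => haB2 ⟨haB, hb⟩
        have hfauv : f a ∈ ({u, v} : Set V) := by
          by_contra hc
          exact hfaB ⟨hfaT, hc⟩
        exact ⟨Or.inr ⟨hfauv, h1, h2.symm ▸ haB⟩, h2, h3⟩
      · obtain ⟨h1, h2, h3⟩ := hf a haxy
        refine ⟨Or.inl ⟨hafB, fun hb => ?_⟩, h2, h3⟩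
        have : f (f a) ∈ B := hb.2
        rw [h2] at this
        exact this.2 hauv
    have evenD : Even ((B \ B2) ∪ T').ncard := hDpair.even_ncard
    have hdisj : Disjoint (B \ B2) T' := by
      rw [Set.disjoint_left]
      rintro a ⟨haB, -⟩ ⟨hauv, -, -⟩
      exact haB.2 hauv
    have hsum : ((B \ B2) ∪ T').ncard = (B \ B2).ncard + T'.ncard :=
      Set.ncard_union_eq hdisj
    have hB2sub : B2 ⊆ B := fun a ha => ha.1
    have hdiffB : (B \ B2).ncard = B.ncard - B2.ncard := Set.ncard_diff hB2sub
    have evenT' : Even T'.ncard := by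
      obtain ⟨k1, e1⟩ := evenB
      obtain ⟨k2, e2⟩ := evenB2
      obtain ⟨k3, e3⟩ := evenD
      have hle : B2.ncard ≤ B.ncard := Set.ncard_le_ncard hB2sub
      exact ⟨k3 - (k1 - k2), by omega⟩
    have hT'sub : T' ⊆ ({u, v} : Set V) := fun a ha => ha.1
    rcases Set.subset_pair_iff_eq.mp hT'sub with he | he | he | he
    · left
      intro w hwuv hwxy hwB
      have : w ∈ T' := ⟨hwuv, hwxy, hwB⟩
      rw [he] at this
      exact this
    · exfalso
      rw [he, Set.ncard_singleton] at evenT'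
      exact (Nat.not_even_one) evenT'
    · exfalso
      rw [he, Set.ncard_singleton] at evenT'
      exact (Nat.not_even_one) evenT'
    · right
      have hu' : u ∈ T' := by rw [he]; simp
      have hv' : v ∈ T' := by rw [he]; simp
      exact ⟨hu'.2.1, hv'.2.1, hu'.2.2, hv'.2.2⟩
  constructor
  · rw [Nat.card_coe_set_eq]; exact hScard4
  intro x' y' hne
  have hxyV : (↑x' : V) ≠ ↑y' := fun h => hne (Subtype.ext h)
  have hmemc : ∀ a : ↥S, a ∈ ({x', y'}ᶜ : Set ↥S) ↔ (↑a : V) ∉ ({↑x', ↑y'} : Set V) := by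
    intro a
    simp [Set.mem_compl_iff, Set.mem_insert_iff, Set.mem_singleton_iff, Subtype.ext_iff]
  obtain ⟨M, hM, hMv⟩ := hG.2 ↑x' ↑y' hxyV
  obtain ⟨f, hf⟩ := matching_toPairing hM
  rw [hMv] at hf
  have huv' : (⟨u, huS⟩ : ↥S) ≠ ⟨v, hvS⟩ := fun h => huv (congrArg Subtype.val h)
  rcases key ↑x' ↑y' x'.2 y'.2 hxyV f hf with hL | ⟨hu1, hv1, hfu, hfv⟩
  · -- no cross pairs: matching stays inside S
    set f1 : ↥S → ↥S := fun a => if h : f ↑a ∈ S then ⟨f ↑a, h⟩ else a with hf1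
    have e : ∀ (b : ↥S) (h : f ↑b ∈ S), f1 b = ⟨f ↑b, h⟩ := fun b h => dif_pos h
    have hpair : IsPairingOn (G.induce S ⊔ SimpleGraph.edge (⟨u, huS⟩ : ↥S) (⟨v, hvS⟩ : ↥S))
        ({x', y'}ᶜ) f1 := by
      intro a ha
      have haV : (↑a : V) ∉ ({↑x', ↑y'} : Set V) := (hmemc a).mp ha
      obtain ⟨h1, h2, h3⟩ := hf ↑a haV
      have hfS : f ↑a ∈ S := by
        by_cases ht : (↑a : V) ∈ T
        · have hab : (↑a : V) ∈ ({u, v} : Set V) := by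
            rcases memUV _ a.2 ht with h | h
            · rw [h]; simp
            · rw [h]; simp
          have hnB : f ↑a ∉ B := hL ↑a hab haV
          rcases memST (f ↑a) with h | h
          · exact h
          · by_contra hc
            exact hnB ⟨h, fun hm => hc (hsub hm)⟩
        · exact adjS _ _ ht h3
      refine ⟨?_, ?_, ?_⟩
      · rw [e a hfS]; exact (hmemc _).mpr h1
      · rw [e a hfS]
        have h4 : f (f ↑a) ∈ S := by rw [h2]; exact a.2
        rw [e ⟨f ↑a, hfS⟩ h4]
        exact Subtype.ext h2
      · rw [e a hfS]
        exact sup_edge_adj_of_adj h3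
    obtain ⟨M1, hM1, hM1v⟩ := hpair.toMatching
    exact ⟨M1, hM1, hM1v⟩
  · -- u and v are matched into B: use the extra edge uv
    set f1 : ↥S → ↥S := fun a =>
      if (↑a : V) = u then ⟨v, hvS⟩ else if (↑a : V) = v then ⟨u, huS⟩ else
        if h : f ↑a ∈ S then ⟨f ↑a, h⟩ else a with hf1
    have eu : ∀ b : ↥S, (↑b : V) = u → f1 b = ⟨v, hvS⟩ := fun b h => if_pos h
    have ev : ∀ b : ↥S, (↑b : V) ≠ u → (↑b : V) = v → f1 b = ⟨u, huS⟩ := fun b h1 h2 => by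
      show (if (↑b : V) = u then _ else _) = _
      rw [if_neg h1, if_pos h2]
    have ee : ∀ (b : ↥S), (↑b : V) ≠ u → (↑b : V) ≠ v → ∀ h : f ↑b ∈ S, f1 b = ⟨f ↑b, h⟩ :=
      fun b h1 h2 h => by
        show (if (↑b : V) = u then _ else _) = _
        rw [if_neg h1, if_neg h2, dif_pos h]
    have hpair : IsPairingOn (G.induce S ⊔ SimpleGraph.edge (⟨u, huS⟩ : ↥S) (⟨v, hvS⟩ : ↥S))
        ({x', y'}ᶜ) f1 := by
      intro a ha
      have haV : (↑a : V) ∉ ({↑x', ↑y'} : Set V) := (hmemc a).mp ha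
      by_cases hau : (↑a : V) = u
      · have haeq : a = ⟨u, huS⟩ := Subtype.ext hau
        rw [eu a hau]
        refine ⟨(hmemc _).mpr hv1, ?_, ?_⟩
        · rw [ev ⟨v, hvS⟩ (Ne.symm huv) rfl, haeq]
        · rw [haeq]; exact sup_edge_adj_pair huv'
      · by_cases hav : (↑a : V) = v
        · have haeq : a = ⟨v, hvS⟩ := Subtype.ext hav
          rw [ev a hau hav]
          refine ⟨(hmemc _).mpr hu1, ?_, ?_⟩
          · rw [eu ⟨u, huS⟩ rfl, haeq]
          · rw [haeq]; exact (sup_edge_adj_pair huv').symm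
        · have haT : (↑a : V) ∉ T := fun ht => by
            rcases memUV _ a.2 ht with h | h
            exacts [hau h, hav h]
          obtain ⟨h1, h2, h3⟩ := hf ↑a haV
          have hfS : f ↑a ∈ S := adjS _ _ haT h3
          have hfau : f ↑a ≠ u := fun hh => by
            rw [hh] at h2
            exact hBS ↑a (h2 ▸ hfu) a.2
          have hfav : f ↑a ≠ v := fun hh => by
            rw [hh] at h2
            exact hBS ↑a (h2 ▸ hfv) a.2
          refine ⟨?_, ?_, ?_⟩
          · rw [ee a hau hav hfS]; exact (hmemc _).mpr h1
          · rw [ee a hau hav hfS]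
            have h4 : f (f ↑a) ∈ S := by rw [h2]; exact a.2
            rw [ee ⟨f ↑a, hfS⟩ hfau hfav h4]
            exact Subtype.ext h2
          · rw [ee a hau hav hfS]
            exact sup_edge_adj_of_adj h3
    obtain ⟨M1, hM1, hM1v⟩ := hpair.toMatching
    exact ⟨M1, hM1, hM1v⟩

lemma piece_pairing (huv : u ≠ v) (huS : u ∈ S) (hvS : v ∈ S)
    (hB : Bicritical (G.induce S ⊔ SimpleGraph.edge (⟨u, huS⟩ : S) (⟨v, hvS⟩ : S)))
    (x' y' : ↥S) (hxy : x' ≠ y') :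
    (∃ f, IsPairingOn G (S \ {↑x', ↑y'}) f) ∨
    ((u ∉ ({↑x', ↑y'} : Set V)) ∧ (v ∉ ({↑x', ↑y'} : Set V)) ∧
      ∃ f, IsPairingOn G (S \ {↑x', ↑y', u, v}) f) := by
  classical
  obtain ⟨M, hM, hMv⟩ := hB.2 x' y' hxy
  obtain ⟨g, hg⟩ := matching_toPairing hM
  rw [hMv] at hg
  set u' : ↥S := ⟨u, huS⟩ with hu'
  set v' : ↥S := ⟨v, hvS⟩ with hv'
  have hmemc : ∀ a : ↥S, a ∈ ({x', y'}ᶜ : Set ↥S) ↔ (↑a : V) ∉ ({↑x', ↑y'} : Set V) := by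
    intro a
    simp [Set.mem_compl_iff, Set.mem_insert_iff, Set.mem_singleton_iff, Subtype.ext_iff]
  by_cases hc : u' ∈ ({x', y'}ᶜ : Set ↥S) ∧ g u' = v'
  · right
    obtain ⟨hu'm, hguv⟩ := hc
    have hv'm : v' ∈ ({x', y'}ᶜ : Set ↥S) := hguv ▸ (hg u' hu'm).1
    have hgvu : g v' = u' := by rw [← hguv]; exact (hg u' hu'm).2.1
    refine ⟨(hmemc u').mp hu'm, (hmemc v').mp hv'm, ?_⟩
    set W : Set ↥S := ({x', y'}ᶜ : Set ↥S) \ {u', v'} with hW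
    have himg : Subtype.val '' W = S \ {↑x', ↑y', u, v} := by
      ext a
      constructor
      · rintro ⟨a', ⟨hc1, hc2⟩, rfl⟩
        refine ⟨a'.2, ?_⟩
        intro hmem
        rcases hmem with h | h | h | h
        · exact hc1 (by left; exact Subtype.ext h)
        · exact hc1 (by right; exact Subtype.ext h)
        · exact hc2 (by left; exact Subtype.ext h)
        · exact hc2 (by right; exact Subtype.ext h)
      · rintro ⟨haS, hmem⟩
        refine ⟨⟨a, haS⟩, ⟨?_, ?_⟩, rfl⟩
        · rintro (h | h)
          · exact hmem (by left; exact congrArg Subtype.val h)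
          · exact hmem (by right; left; exact congrArg Subtype.val h)
        · rintro (h | h)
          · exact hmem (by right; right; left; exact congrArg Subtype.val h)
          · exact hmem (by right; right; right; exact congrArg Subtype.val h)
    refine ⟨_, himg ▸ lift_pairing (g := g) (W := W) ?_⟩
    rintro a ⟨ham, hane⟩
    obtain ⟨h1, h2, h3⟩ := hg a ham
    have hanu : a ≠ u' := fun hh => hane (by left; exact hh)
    have hanv : a ≠ v' := fun hh => hane (by right; exact hh)
    have hgau : g a ≠ u' := fun hh => hanv (by rw [← hguv, ← hh]; exact h2.symm)
    have hgav : g a ≠ v' := fun hh => hanu (by rw [← hgvu, ← hh]; exact h2.symm)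
    have hadj : G.Adj ↑a ↑(g a) := by
      rcases sup_edge_adj_elim h3 with h | ⟨⟨ha1, _⟩ | ⟨ha1, ha2⟩⟩
      · exact h
      · exact absurd ha1 hanu
      · exact absurd ha1 hanv
    refine ⟨⟨h1, ?_⟩, h2, hadj⟩
    rintro (h | h)
    exacts [hgau h, hgav h]
  · left
    have hnopair : ∀ a ∈ ({x', y'}ᶜ : Set ↥S), G.Adj ↑a ↑(g a) := by
      intro a ham
      obtain ⟨h1, h2, h3⟩ := hg a ham
      rcases sup_edge_adj_elim h3 with h | ⟨⟨ha1, ha2⟩ | ⟨ha1, ha2⟩⟩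
      · exact h
      · exact absurd ⟨ha1 ▸ ham, ha1 ▸ ha2⟩ hc
      · exfalso
        have hu'm : u' ∈ ({x', y'}ᶜ : Set ↥S) := ha2 ▸ h1
        have : g u' = v' := by rw [← ha2, h2, ha1]
        exact hc ⟨hu'm, this⟩
    have himg : Subtype.val '' ({x', y'}ᶜ : Set ↥S) = S \ {↑x', ↑y'} := by
      ext a
      constructor
      · rintro ⟨a', hc1, rfl⟩
        refine ⟨a'.2, ?_⟩
        rintro (h | h)
        · exact hc1 (by left; exact Subtype.ext h)
        · exact hc1 (by right; exact Subtype.ext h)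
      · rintro ⟨haS, hmem⟩
        refine ⟨⟨a, haS⟩, ?_, rfl⟩
        rintro (h | h)
        · exact hmem (by left; exact congrArg Subtype.val h)
        · exact hmem (by right; exact congrArg Subtype.val h)
    refine ⟨_, himg ▸ lift_pairing (g := g) (W := ({x', y'}ᶜ : Set ↥S)) ?_⟩
    intro a ham
    obtain ⟨h1, h2, _⟩ := hg a ham
    exact ⟨h1, h2, hnopair a ham⟩

lemma piece_pairing_uv (huv : u ≠ v) (huS : u ∈ S) (hvS : v ∈ S)
    (hB : Bicritical (G.induce S ⊔ SimpleGraph.edge (⟨u, huS⟩ : S) (⟨v, hvS⟩ : S))) :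
    ∃ f, IsPairingOn G (S \ {u, v}) f := by
  have hne : (⟨u, huS⟩ : ↥S) ≠ ⟨v, hvS⟩ := fun h => huv (congrArg Subtype.val h)
  rcases piece_pairing huv huS hvS hB ⟨u, huS⟩ ⟨v, hvS⟩ hne with h | ⟨hu1, -, -⟩
  · exact h
  · exact absurd (Set.mem_insert _ _) hu1

lemma piece_pm (huv : u ≠ v) (huS : u ∈ S) (hvS : v ∈ S) (hcardS : 2 < Nat.card S)
    (hB : Bicritical (G.induce S ⊔ SimpleGraph.edge (⟨u, huS⟩ : S) (⟨v, hvS⟩ : S))) :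
    ∃ f, IsPairingOn G S f := by
  classical
  have hcardS' : 2 < S.ncard := by rwa [Nat.card_coe_set_eq] at hcardS
  have hns : ¬ S ⊆ ({u, v} : Set V) := fun h => by
    have := Set.ncard_le_ncard h (Set.toFinite _)
    rw [Set.ncard_pair huv] at this
    omega
  obtain ⟨w, hwS, hwuv⟩ := Set.not_subset.mp hns
  have hwu : w ≠ u := fun h => hwuv (by rw [h]; left; rfl)
  have hwv : w ≠ v := fun h => hwuv (by rw [h]; right; rfl)
  set u' : ↥S := ⟨u, huS⟩ with hu'
  set v' : ↥S := ⟨v, hvS⟩ with hv'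
  set w' : ↥S := ⟨w, hwS⟩ with hw'
  obtain ⟨M, hM, hMv⟩ := hB.2 u' w' (fun h => hwu (congrArg Subtype.val h).symm)
  obtain ⟨g, hg⟩ := matching_toPairing hM
  rw [hMv] at hg
  have hv'm : v' ∈ ({u', w'}ᶜ : Set ↥S) := by
    intro hmem
    rcases hmem with h | h
    · exact huv.symm (congrArg Subtype.val h)
    · exact hwv (congrArg Subtype.val h).symm
  obtain ⟨hz1, hz2, hz3⟩ := hg v' hv'm
  set z' : ↥S := g v' with hz'
  have hz'u : z' ≠ u' := fun hh => hz1 (by left; exact hh)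
  have hadjvz : G.Adj v ↑z' := by
    rcases sup_edge_adj_elim hz3 with h | ⟨⟨ha1, _⟩ | ⟨_, ha2⟩⟩
    · exact h
    · exact absurd (congrArg Subtype.val ha1) huv.symm
    · exact absurd ha2 hz'u
  have hzv : (↑z' : V) ≠ v := hadjvz.ne'
  obtain ⟨M2, hM2, hM2v⟩ := hB.2 v' z' (fun h => hzv (congrArg Subtype.val h).symm)
  obtain ⟨p, hp⟩ := matching_toPairing hM2
  rw [hM2v] at hp
  refine ⟨fun a => if a = v then ↑z' else if a = ↑z' then v else
    if hs : a ∈ S then ↑(p ⟨a, hs⟩) else a, ?_⟩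
  intro a haS
  by_cases h1 : a = v
  · simp only [if_pos h1, if_neg hzv, if_pos rfl]
    exact ⟨z'.2, h1.symm, h1 ▸ hadjvz⟩
  · by_cases h2 : a = ↑z'
    · simp only [if_neg h1, if_pos h2, if_pos rfl]
      exact ⟨hvS, h2.symm, h2 ▸ hadjvz.symm⟩
    · have ham : (⟨a, haS⟩ : ↥S) ∈ ({v', z'}ᶜ : Set ↥S) := by
        intro hmem
        rcases hmem with h | h
        · exact h1 (congrArg Subtype.val h)
        · exact h2 (congrArg Subtype.val h)
      obtain ⟨q1, q2, q3⟩ := hp ⟨a, haS⟩ ham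
      have hbv : (↑(p ⟨a, haS⟩) : V) ≠ v := fun hh => q1 (by left; exact Subtype.ext hh)
      have hbz : (↑(p ⟨a, haS⟩) : V) ≠ ↑z' := fun hh => q1 (by right; exact Subtype.ext hh)
      have hadj : G.Adj a ↑(p ⟨a, haS⟩) := by
        rcases sup_edge_adj_elim q3 with h | ⟨⟨_, ha2⟩ | ⟨ha1, _⟩⟩
        · exact h
        · exact absurd (congrArg Subtype.val ha2) hbv
        · exact absurd (congrArg Subtype.val ha1) h1
      simp only [if_neg h1, if_neg h2, dif_pos haS, if_neg hbv, if_neg hbz,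
        dif_pos (p ⟨a, haS⟩).2]
      refine ⟨(p ⟨a, haS⟩).2, ?_, hadj⟩
      have : (⟨↑(p ⟨a, haS⟩), (p ⟨a, haS⟩).2⟩ : ↥S) = p ⟨a, haS⟩ := rfl
      rw [this, q2]

lemma cover_pair (huv : u ≠ v) (hcover : S ∪ T = Set.univ) (hinter : S ∩ T = {u, v})
    (huS : u ∈ S) (hvS : v ∈ S) (huT : u ∈ T) (hvT : v ∈ T)
    (hBS : Bicritical (G.induce S ⊔ SimpleGraph.edge (⟨u, huS⟩ : S) (⟨v, hvS⟩ : S)))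
    (hBT : Bicritical (G.induce T ⊔ SimpleGraph.edge (⟨u, huT⟩ : T) (⟨v, hvT⟩ : T)))
    (hcardT : 2 < Nat.card T)
    {x y : V} (hx : x ∈ S) (hy : y ∈ S) (hxy : x ≠ y) :
    ∃ f, IsPairingOn G (({x, y}ᶜ : Set V)) f := by
  classical
  have memST : ∀ a : V, a ∈ S ∨ a ∈ T := fun a => by
    have : a ∈ S ∪ T := hcover.symm ▸ Set.mem_univ a
    exact this
  have memUV : ∀ a : V, a ∈ S → a ∈ T → a = u ∨ a = v := fun a h1 h2 => by
    have : a ∈ S ∩ T := ⟨h1, h2⟩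
    rw [hinter] at this; exact this
  have hne : (⟨x, hx⟩ : ↥S) ≠ ⟨y, hy⟩ := fun h => hxy (congrArg Subtype.val h)
  rcases piece_pairing huv huS hvS hBS ⟨x, hx⟩ ⟨y, hy⟩ hne with ⟨f, hf0⟩ | ⟨hu1, hv1, f, hf0⟩
  · have hf : IsPairingOn G (S \ {x, y}) f := hf0
    obtain ⟨g, hg⟩ := piece_pairing_uv huv huT hvT hBT
    have hdisj : Disjoint (S \ {x, y}) (T \ {u, v}) := by
      rw [Set.disjoint_left]
      rintro a ⟨haS, -⟩ ⟨haT, hauv⟩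
      rcases memUV a haS haT with h | h
      · exact hauv (by simp [h])
      · exact hauv (by simp [h])
    have hun : (S \ {x, y}) ∪ (T \ {u, v}) = ({x, y}ᶜ : Set V) := by
      ext a
      constructor
      · rintro (⟨-, h⟩ | ⟨haT, hauv⟩)
        · exact h
        · rintro (rfl | rfl)
          · rcases memUV a hx haT with h | h
            · exact hauv (by simp [h])
            · exact hauv (by simp [h])
          · rcases memUV a hy haT with h | h
            · exact hauv (by simp [h])
            · exact hauv (by simp [h])
      · intro ham
        rcases memST a with h | h
        · exact Or.inl ⟨h, ham⟩
        · by_cases hc : a ∈ ({u, v} : Set V)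
          · rcases hc with rfl | rfl
            · exact Or.inl ⟨huS, ham⟩
            · exact Or.inl ⟨hvS, ham⟩
          · exact Or.inr ⟨h, hc⟩
    exact ⟨_, hun ▸ hf.union hg hdisj⟩
  · have hu1' : u ∉ ({x, y} : Set V) := hu1
    have hv1' : v ∉ ({x, y} : Set V) := hv1
    have hf : IsPairingOn G (S \ {x, y, u, v}) f := hf0
    obtain ⟨g, hg⟩ := piece_pm huv huT hvT hcardT hBT
    have hdisj : Disjoint (S \ {x, y, u, v}) T := by
      rw [Set.disjoint_left]
      rintro a ⟨haS, ham⟩ haT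
      rcases memUV a haS haT with h | h
      · exact ham (by simp [h])
      · exact ham (by simp [h])
    have hun : (S \ {x, y, u, v}) ∪ T = ({x, y}ᶜ : Set V) := by
      ext a
      constructor
      · rintro (⟨-, h⟩ | haT)
        · intro hm
          rcases hm with rfl | rfl
          · exact h (by simp)
          · exact h (by simp)
        · rintro (rfl | rfl)
          · rcases memUV a hx haT with h | h
            · exact hu1' (by simp [← h])
            · exact hv1' (by simp [← h])
          · rcases memUV a hy haT with h | h
            · exact hu1' (by simp [← h])
            · exact hv1' (by simp [← h])
      · intro ham
        rcases memST a with h | h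
        · by_cases hc : a ∈ ({u, v} : Set V)
          · rcases hc with rfl | rfl
            · exact Or.inr huT
            · exact Or.inr hvT
          · refine Or.inl ⟨h, ?_⟩
            intro hm
            rcases hm with rfl | rfl | rfl | rfl
            · exact ham (by simp)
            · exact ham (by simp)
            · exact hc (by simp)
            · exact hc (by simp)
        · exact Or.inr h
    exact ⟨_, hun ▸ hf.union hg hdisj⟩

lemma cover_cross (huv : u ≠ v) (hcover : S ∪ T = Set.univ) (hinter : S ∩ T = {u, v})
    (huS : u ∈ S) (hvS : v ∈ S) (huT : u ∈ T) (hvT : v ∈ T)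
    (hBS : Bicritical (G.induce S ⊔ SimpleGraph.edge (⟨u, huS⟩ : S) (⟨v, hvS⟩ : S)))
    (hBT : Bicritical (G.induce T ⊔ SimpleGraph.edge (⟨u, huT⟩ : T) (⟨v, hvT⟩ : T)))
    {x y : V} (hx : x ∈ S) (hxT : x ∉ T) (hy : y ∈ T) (hyS : y ∉ S) :
    ∃ f, IsPairingOn G (({x, y}ᶜ : Set V)) f := by
  classical
  have memST : ∀ a : V, a ∈ S ∨ a ∈ T := fun a => by
    have : a ∈ S ∪ T := hcover.symm ▸ Set.mem_univ a
    exact this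
  have memUV : ∀ a : V, a ∈ S → a ∈ T → a = u ∨ a = v := fun a h1 h2 => by
    have : a ∈ S ∩ T := ⟨h1, h2⟩
    rw [hinter] at this; exact this
  have hxu : x ≠ u := fun h => hxT (h ▸ huT)
  have hxv : x ≠ v := fun h => hxT (h ▸ hvT)
  have hyu : y ≠ u := fun h => hyS (h ▸ huS)
  have hyv : y ≠ v := fun h => hyS (h ▸ hvS)
  have hne1 : (⟨x, hx⟩ : ↥S) ≠ ⟨u, huS⟩ := fun h => hxu (congrArg Subtype.val h)
  have hne2 : (⟨y, hy⟩ : ↥T) ≠ ⟨v, hvT⟩ := fun h => hyv (congrArg Subtype.val h)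
  rcases piece_pairing huv huS hvS hBS ⟨x, hx⟩ ⟨u, huS⟩ hne1 with ⟨f, hf0⟩ | ⟨hu1, -, -⟩
  swap
  · exact absurd (by right; rfl) hu1
  rcases piece_pairing huv huT hvT hBT ⟨y, hy⟩ ⟨v, hvT⟩ hne2 with ⟨g, hg0⟩ | ⟨-, hv1, -⟩
  swap
  · exact absurd (by right; rfl) hv1
  have hf : IsPairingOn G (S \ {x, u}) f := hf0
  have hg : IsPairingOn G (T \ {y, v}) g := hg0
  have hdisj : Disjoint (S \ {x, u}) (T \ {y, v}) := by
    rw [Set.disjoint_left]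
    rintro a ⟨haS, ham1⟩ ⟨haT, ham2⟩
    rcases memUV a haS haT with h | h
    · exact ham1 (by simp [h])
    · exact ham2 (by simp [h])
  have hun : (S \ {x, u}) ∪ (T \ {y, v}) = ({x, y}ᶜ : Set V) := by
    ext a
    constructor
    · rintro (⟨haS, ham⟩ | ⟨haT, ham⟩)
      · rintro (rfl | rfl)
        · exact ham (by simp)
        · exact hyS haS
      · rintro (rfl | rfl)
        · exact hxT haT
        · exact ham (by simp)
    · intro ham
      have hax : a ≠ x := fun h => ham (by simp [h])
      have hay : a ≠ y := fun h => ham (by simp [h])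
      by_cases haS : a ∈ S
      · by_cases hau : a = u
        · refine Or.inr ⟨hau ▸ huT, ?_⟩
          intro hm
          rcases hm with rfl | rfl
          · exact hyu hau
          · exact huv hau.symm
        · refine Or.inl ⟨haS, ?_⟩
          intro hm
          rcases hm with rfl | rfl
          · exact hax rfl
          · exact hau rfl
      · refine Or.inr ⟨(memST a).resolve_left haS, ?_⟩
        intro hm
        rcases hm with rfl | rfl
        · exact hay rfl
        · exact haS hvS
  exact ⟨_, hun ▸ hf.union hg hdisj⟩

lemma backward_dir (huv : u ≠ v) (hcover : S ∪ T = Set.univ) (hinter : S ∩ T = {u, v})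
    (huS : u ∈ S) (hvS : v ∈ S) (huT : u ∈ T) (hvT : v ∈ T)
    (hcardT : 2 < Nat.card T) (hcardS : 2 < Nat.card S)
    (hBS : Bicritical (G.induce S ⊔ SimpleGraph.edge (⟨u, huS⟩ : S) (⟨v, hvS⟩ : S)))
    (hBT : Bicritical (G.induce T ⊔ SimpleGraph.edge (⟨u, huT⟩ : T) (⟨v, hvT⟩ : T))) :
    Bicritical G := by
  classical
  have memST : ∀ a : V, a ∈ S ∨ a ∈ T := fun a => by
    have : a ∈ S ∪ T := hcover.symm ▸ Set.mem_univ a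
    exact this
  have memUV : ∀ a : V, a ∈ S → a ∈ T → a = u ∨ a = v := fun a h1 h2 => by
    have : a ∈ S ∩ T := ⟨h1, h2⟩
    rw [hinter] at this; exact this
  have hcover' : T ∪ S = Set.univ := by rw [Set.union_comm]; exact hcover
  have hinter' : T ∩ S = {u, v} := by rw [Set.inter_comm]; exact hinter
  constructor
  · have h4 : 4 ≤ S.ncard := by
      have := hBS.1; rwa [Nat.card_coe_set_eq] at this
    have hcardT' : 2 < T.ncard := by rwa [Nat.card_coe_set_eq] at hcardT
    have hns : ¬ T ⊆ ({u, v} : Set V) := fun h => by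
      have := Set.ncard_le_ncard h (Set.toFinite _)
      rw [Set.ncard_pair huv] at this
      omega
    obtain ⟨b, hbT, hbuv⟩ := Set.not_subset.mp hns
    have hbS : b ∉ S := fun h => by
      rcases memUV b h hbT with h' | h'
      · exact hbuv (by simp [h'])
      · exact hbuv (by simp [h'])
    have h5 : (insert b S).ncard = S.ncard + 1 :=
      Set.ncard_insert_of_notMem hbS (Set.toFinite _)
    have h6 : (insert b S).ncard ≤ (Set.univ : Set V).ncard :=
      Set.ncard_le_ncard (Set.subset_univ _) (Set.toFinite _)
    rw [Set.ncard_univ] at h6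
    omega
  · intro x y hxy
    suffices hp : ∃ f, IsPairingOn G (({x, y}ᶜ : Set V)) f by
      obtain ⟨f, hf⟩ := hp
      exact hf.toMatching
    by_cases hxS : x ∈ S
    · by_cases hyS : y ∈ S
      · exact cover_pair huv hcover hinter huS hvS huT hvT hBS hBT hcardT hxS hyS hxy
      · have hyT : y ∈ T := (memST y).resolve_left hyS
        by_cases hxT : x ∈ T
        · exact cover_pair huv hcover' hinter' huT hvT huS hvS hBT hBS hcardS hxT hyT hxy
        · exact cover_cross huv hcover hinter huS hvS huT hvT hBS hBT hxS hxT hyT hyS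
    · have hxT : x ∈ T := (memST x).resolve_left hxS
      by_cases hyT : y ∈ T
      · exact cover_pair huv hcover' hinter' huT hvT huS hvS hBT hBS hcardS hxT hyT hxy
      · have hyS : y ∈ S := (memST y).resolve_right hyT
        obtain ⟨f, hf⟩ := cover_cross huv hcover hinter huS hvS huT hvT hBS hBT hyS hyT hxT hxS
        exact ⟨f, by rwa [Set.pair_comm] at hf⟩

end Main

end Aux
/-- Splitting a graph along a 2-set `{u, v}`: `G` is bicritical iff both pieces
(with the edge `uv` added) are bicritical. -/
theorem bicritical_iff_both_pieces_bicritical {V : Type*} [Fintype V]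
    (G : SimpleGraph V) (S1 S2 : Set V) (u v : V) (huv : u ≠ v)
    (hcover : S1 ∪ S2 = Set.univ) (hinter : S1 ∩ S2 = {u, v})
    (hu1 : u ∈ S1) (hv1 : v ∈ S1) (hu2 : u ∈ S2) (hv2 : v ∈ S2)
    (hedges : ∀ a b : V, G.Adj a b → (a ∈ S1 ∧ b ∈ S1) ∨ (a ∈ S2 ∧ b ∈ S2))
    (hconn1 : (G.induce S1).Connected) (hconn2 : (G.induce S2).Connected)
    (hcard1 : 2 < Nat.card S1) (hcard2 : 2 < Nat.card S2) :
    Bicritical G ↔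
      Bicritical (G.induce S1 ⊔ SimpleGraph.edge (⟨u, hu1⟩ : S1) (⟨v, hv1⟩ : S1)) ∧
      Bicritical (G.induce S2 ⊔ SimpleGraph.edge (⟨u, hu2⟩ : S2) (⟨v, hv2⟩ : S2)) := by
  constructor
  · intro hG
    refine ⟨forward_piece huv hcover hinter hu1 hv1 hedges hcard1 hG, ?_⟩
    refine forward_piece huv (by rw [Set.union_comm]; exact hcover)
      (by rw [Set.inter_comm]; exact hinter) hu2 hv2 (fun a b h => (hedges a b h).symm)
      hcard2 hG
  · rintro ⟨h1, h2⟩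
    exact backward_dir huv hcover hinter hu1 hv1 hu2 hv2 hcard2 hcard1 h1 h2
end

section
/- Let G be a bicritical graph with a 2-vertex cut {u, v}. Then both u and v have at least two neighbours in each connected component of G − {u, v}. -/
private lemma even_ncard_closed {V : Type*} [Fintype V] {G : SimpleGraph V}
    {M : G.Subgraph} (hM : M.IsMatching) (S : Set V)
    (hsub : S ⊆ M.verts)
    (hcl : ∀ x ∈ S, ∀ y, M.Adj x y → y ∈ S) :
    Even S.ncard := by
  classical
  have hmatch : (M.induce S).IsMatching := by
    intro x hx
    obtain ⟨y, hxy, hyu⟩ := hM (hsub hx)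
    exact ⟨y, ⟨hx, hcl x hx y hxy, hxy⟩, fun z hz => hyu z hz.2.2⟩
  have h1 := hmatch.even_card
  rwa [← Set.ncard_eq_toFinset_card'] at h1

private lemma aux_two {V : Type*} [Fintype V] (G : SimpleGraph V) (a b : V) (hab : a ≠ b)
    (hbc : Bicritical G) (K : Set V) (hK : K = ({a, b} : Set V)ᶜ)
    (C : (G.induce K).ConnectedComponent) :
    2 ≤ {w : K | w ∈ C.supp ∧ G.Adj a ↑w}.ncard := by
  classical
  subst hK
  have hne : ∀ x : (({a, b} : Set V)ᶜ : Set V), (x : V) ≠ a ∧ (x : V) ≠ b := by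
    intro x
    have := x.2
    simp only [Set.mem_compl_iff, Set.mem_insert_iff, Set.mem_singleton_iff] at this
    exact ⟨fun h => this (Or.inl h), fun h => this (Or.inr h)⟩
  by_contra hlt
  push_neg at hlt
  have hle : {w : (({a, b} : Set V)ᶜ : Set V) | w ∈ C.supp ∧ G.Adj a ↑w}.ncard ≤ 1 := by omega
  have hsub1 : ∀ x ∈ {w : (({a, b} : Set V)ᶜ : Set V) | w ∈ C.supp ∧ G.Adj a ↑w},
      ∀ y ∈ {w : (({a, b} : Set V)ᶜ : Set V) | w ∈ C.supp ∧ G.Adj a ↑w}, x = y :=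
    (Set.ncard_le_one (Set.toFinite _)).1 hle
  obtain ⟨r, hr⟩ := C.exists_rep
  have hrC : r ∈ C.supp := by
    rw [SimpleGraph.ConnectedComponent.mem_supp_iff]; exact hr
  obtain ⟨x0, hx0C, hx0u⟩ :
      ∃ x0, x0 ∈ C.supp ∧ ∀ w ∈ C.supp, G.Adj a ↑w → w = x0 := by
    by_cases hN : {w : (({a, b} : Set V)ᶜ : Set V) | w ∈ C.supp ∧ G.Adj a ↑w}.Nonempty
    · obtain ⟨x0, hx0⟩ := hN
      exact ⟨x0, hx0.1, fun w hw hadj => hsub1 w ⟨hw, hadj⟩ x0 hx0⟩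
    · exact ⟨r, hrC, fun w hw hadj => absurd ⟨w, hw, hadj⟩ hN⟩
  -- helper: adjacency in G between elements of K puts them in the same component
  have hcomp : ∀ (w : (({a, b} : Set V)ᶜ : Set V)) (y : V) (hyK : y ∈ (({a, b} : Set V)ᶜ : Set V)),
      w ∈ C.supp → G.Adj ↑w y →
      (⟨y, hyK⟩ : (({a, b} : Set V)ᶜ : Set V)) ∈ C.supp := by
    intro w y hyK hwC hadj
    have hadj' : (G.induce (({a, b} : Set V)ᶜ : Set V)).Adj w ⟨y, hyK⟩ := hadj
    rw [SimpleGraph.ConnectedComponent.mem_supp_iff] at hwC ⊢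
    rw [← hwC]
    exact (SimpleGraph.ConnectedComponent.connectedComponentMk_eq_of_adj hadj').symm
  -- Even cardinality of C.supp
  obtain ⟨M1, hM1, hM1v⟩ := hbc.2 a b hab
  have hev1 : Even (Subtype.val '' C.supp : Set V).ncard := by
    apply even_ncard_closed hM1
    · rintro _ ⟨w, hw, rfl⟩
      rw [hM1v]; exact w.2
    · rintro _ ⟨w, hwC, rfl⟩ y hady
      have hyK : y ∈ (({a, b} : Set V)ᶜ : Set V) := by
        rw [← hM1v]; exact M1.edge_vert hady.symm
      exact ⟨⟨y, hyK⟩, hcomp w y hyK hwC (M1.adj_sub hady), rfl⟩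
  -- Even cardinality of C.supp \ {x0}
  have hbx0 : b ≠ (x0 : V) := (hne x0).2.symm
  obtain ⟨M2, hM2, hM2v⟩ := hbc.2 b ↑x0 hbx0
  have hev2 : Even (Subtype.val '' (C.supp \ {x0}) : Set V).ncard := by
    apply even_ncard_closed hM2
    · rintro _ ⟨w, hw, rfl⟩
      rw [hM2v]
      simp only [Set.mem_compl_iff, Set.mem_insert_iff, Set.mem_singleton_iff, not_or]
      exact ⟨(hne w).2, fun h => hw.2 (Subtype.ext h)⟩
    · rintro _ ⟨w, hw, rfl⟩ y hady
      have hy2 : y ∈ ({b, (x0 : V)} : Set V)ᶜ := by rw [← hM2v]; exact M2.edge_vert hady.symm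
      simp only [Set.mem_compl_iff, Set.mem_insert_iff, Set.mem_singleton_iff, not_or] at hy2
      have hGwy : G.Adj ↑w y := M2.adj_sub hady
      have hya : y ≠ a := by
        intro h; subst h
        exact hw.2 (hx0u w hw.1 hGwy.symm)
      have hyK : y ∈ (({a, b} : Set V)ᶜ : Set V) := by
        simp only [Set.mem_compl_iff, Set.mem_insert_iff, Set.mem_singleton_iff, not_or]
        exact ⟨hya, hy2.1⟩
      refine ⟨⟨y, hyK⟩, ⟨hcomp w y hyK hw.1 hGwy, ?_⟩, rfl⟩
      intro h
      exact hy2.2 (congrArg Subtype.val h)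
  rw [Set.ncard_image_of_injective _ Subtype.val_injective] at hev1 hev2
  have hdiff : (C.supp \ {x0}).ncard = C.supp.ncard - 1 :=
    Set.ncard_diff_singleton_of_mem hx0C
  have hpos : 0 < C.supp.ncard := (Set.ncard_pos (Set.toFinite _)).2 ⟨x0, hx0C⟩
  obtain ⟨k, hk⟩ := hev1
  obtain ⟨m, hm⟩ := hev2
  omega

/-- In a bicritical graph with a 2-vertex cut `{u, v}`, both `u` and `v` have at least two
neighbours in each connected component of `G − {u, v}`. -/
theorem bicritical_twoCut_two_neighbours {V : Type*} [Fintype V]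
    (G : SimpleGraph V) (u v : V) (hbc : Bicritical G) (hcut : IsTwoCut G u v) :
    ∀ C : (G.induce ({u, v}ᶜ : Set V)).ConnectedComponent,
      2 ≤ {w : ({u, v}ᶜ : Set V) | w ∈ C.supp ∧ G.Adj u ↑w}.ncard ∧
      2 ≤ {w : ({u, v}ᶜ : Set V) | w ∈ C.supp ∧ G.Adj v ↑w}.ncard := by
  intro C
  refine ⟨aux_two G u v hcut.1 hbc _ rfl C, ?_⟩
  exact aux_two G v u hcut.1.symm hbc _ (by rw [Set.pair_comm]) C
end

section
/- Let G be a bicritical graph with a 2-vertex cut {u, v} such that uv is an edge of G. Then G − uv is bicritical and the edge uv is removable in G. -/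
open SimpleGraph

namespace BicritAux

variable {V : Type*}

/-- Restriction of a subgraph to a vertex set. -/
def restrictSet {G : SimpleGraph V} (M : G.Subgraph) (X : Set V) : G.Subgraph where
  verts := M.verts ∩ X
  Adj a b := M.Adj a b ∧ a ∈ X ∧ b ∈ X
  adj_sub h := M.adj_sub h.1
  edge_vert h := ⟨M.edge_vert h.1, h.2.1⟩
  symm := ⟨fun a b h => ⟨M.adj_symm h.1, h.2.2, h.2.1⟩⟩

lemma restrictSet_isMatching {G : SimpleGraph V} {M : G.Subgraph} (hM : M.IsMatching)
    {X : Set V} (hX : ∀ a b, a ∈ X → M.Adj a b → b ∈ X) :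
    (restrictSet M X).IsMatching := by
  rintro a ⟨haM, haX⟩
  obtain ⟨w, hw, huniq⟩ := hM haM
  exact ⟨w, ⟨hw, haX, hX a w haX hw⟩, fun y hy => huniq y hy.1⟩

lemma even_matching_inter [Fintype V] {G : SimpleGraph V} {M : G.Subgraph}
    (hM : M.IsMatching) {X : Set V} (hX : ∀ a b, a ∈ X → M.Adj a b → b ∈ X) :
    Even (M.verts ∩ X).ncard := by
  classical
  haveI : Fintype ((restrictSet M X).verts) := Set.Finite.fintype (Set.toFinite _)
  have h := (restrictSet_isMatching hM hX).even_card
  have h2 : ((restrictSet M X).verts).ncard = (restrictSet M X).verts.toFinset.card :=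
    Set.ncard_eq_toFinset_card' _
  have h3 : Even ((restrictSet M X).verts).ncard := h2 ▸ h
  exact h3

lemma even_contra [Fintype V] {s : Set V} {a : V} (ha : a ∈ s)
    (h1 : Even s.ncard) (h2 : Even (s \ {a}).ncard) : False := by
  rw [Set.ncard_diff_singleton_of_mem ha] at h2
  have h3 : 0 < s.ncard := (Set.ncard_pos).mpr ⟨a, ha⟩
  rw [Nat.even_iff] at h1 h2
  omega

/-- The graph `G` with all edges at `u` or `v` removed. -/
def cutSide (G : SimpleGraph V) (u v : V) : SimpleGraph V where
  Adj a b := G.Adj a b ∧ a ≠ u ∧ a ≠ v ∧ b ≠ u ∧ b ≠ v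
  symm := ⟨fun a b h => ⟨h.1.symm, h.2.2.2.1, h.2.2.2.2, h.2.1, h.2.2.1⟩⟩
  loopless := ⟨fun a h => G.loopless.irrefl a h.1⟩

lemma cutSide_isolated_u {G : SimpleGraph V} {u v z : V} (hzu : z ≠ u)
    (h : (cutSide G u v).Reachable z u) : False := by
  obtain ⟨w⟩ := h.symm
  cases w with
  | nil => exact hzu rfl
  | cons h' p => exact h'.2.1 rfl

lemma cutSide_isolated_v {G : SimpleGraph V} {u v z : V} (hzv : z ≠ v)
    (h : (cutSide G u v).Reachable z v) : False := by
  obtain ⟨w⟩ := h.symm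
  cases w with
  | nil => exact hzv rfl
  | cons h' p => exact h'.2.2.1 rfl

lemma cutSide_lift {G : SimpleGraph V} {u v : V} :
    ∀ {a b : V} (_ : (cutSide G u v).Walk a b) (ha : a ∈ ({u, v}ᶜ : Set V))
      (hb : b ∈ ({u, v}ᶜ : Set V)),
      (G.induce ({u, v}ᶜ : Set V)).Reachable ⟨a, ha⟩ ⟨b, hb⟩ := by
  intro a b w
  induction w with
  | nil => intro ha hb; rfl
  | @cons a c b h p ih =>
    intro ha hb
    have hc : c ∈ ({u, v}ᶜ : Set V) := by
      simp only [Set.mem_compl_iff, Set.mem_insert_iff, Set.mem_singleton_iff]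
      push_neg
      exact ⟨h.2.2.2.1, h.2.2.2.2⟩
    have step : (G.induce ({u, v}ᶜ : Set V)).Reachable ⟨a, ha⟩ ⟨c, hc⟩ :=
      ⟨Walk.cons (by exact h.1 : G.Adj _ _) Walk.nil⟩
    exact step.trans (ih hc hb)

/-- Transfer a matching of `G` avoiding the edge `uv` to `G.deleteEdges {s(u,v)}`. -/
def toDeleted (G : SimpleGraph V) (u v : V) (M : G.Subgraph) (h : ¬ M.Adj u v) :
    (G.deleteEdges {s(u, v)}).Subgraph where
  verts := M.verts
  Adj := M.Adj
  adj_sub := by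
    intro a b hab
    rw [SimpleGraph.deleteEdges_adj]
    refine ⟨M.adj_sub hab, ?_⟩
    simp only [Set.mem_singleton_iff]
    intro he
    rcases Sym2.eq_iff.mp he with ⟨rfl, rfl⟩ | ⟨rfl, rfl⟩
    · exact h hab
    · exact h (M.adj_symm hab)
  edge_vert := M.edge_vert
  symm := M.symm

lemma toDeleted_isMatching {G : SimpleGraph V} {u v : V} {M : G.Subgraph}
    (hM : M.IsMatching) (h : ¬ M.Adj u v) : (toDeleted G u v M h).IsMatching :=
  fun _ ha => hM ha

lemma exists_other [Fintype V] (h : 2 ≤ Fintype.card V) (a : V) : ∃ b : V, b ≠ a := by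
  have := Fintype.exists_ne_of_one_lt_card (by omega) a
  exact this

lemma exists_pair_ne_ne [Fintype V] (h : 3 ≤ Fintype.card V) (a : V) :
    ∃ d e : V, d ≠ e ∧ d ≠ a ∧ e ≠ a := by
  classical
  have h1 : 2 ≤ ((Finset.univ : Finset V).erase a).card := by
    rw [Finset.card_erase_of_mem (Finset.mem_univ a)]
    simp only [Finset.card_univ]; omega
  obtain ⟨d, hd⟩ := Finset.card_pos.mp (by omega : 0 < ((Finset.univ : Finset V).erase a).card)
  have h2 : 0 < (((Finset.univ : Finset V).erase a).erase d).card := by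
    rw [Finset.card_erase_of_mem hd]; omega
  obtain ⟨e, he⟩ := Finset.card_pos.mp h2
  refine ⟨d, e, ?_, ?_, ?_⟩
  · exact fun hde => (Finset.mem_erase.mp he).1 hde.symm
  · exact (Finset.mem_erase.mp hd).1
  · exact (Finset.mem_erase.mp (Finset.mem_erase.mp he).2).1

/-- A bicritical graph is connected. -/
lemma bicritical_connected [Fintype V] {B : SimpleGraph V} (h : Bicritical B) :
    B.Connected := by
  classical
  have hcard : 4 ≤ Fintype.card V := by
    have := h.1; rwa [Nat.card_eq_fintype_card] at this
  haveI : Nonempty V := Fintype.card_pos_iff.mp (by omega)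
  rw [SimpleGraph.connected_iff]
  refine ⟨?_, inferInstance⟩
  intro a b
  by_contra hab
  have hne : a ≠ b := by rintro rfl; exact hab (Reachable.refl a)
  set X : Set V := {w | B.Reachable a w} with hX
  have haX : a ∈ X := Reachable.refl a
  have hbX : b ∉ X := hab
  have hXclosed : ∀ (M : B.Subgraph), ∀ s t, s ∈ X → M.Adj s t → t ∈ X :=
    fun M s t hs hst => Reachable.trans hs (M.adj_sub hst).reachable
  -- find a neighbor c of a
  obtain ⟨d, e, hde, hda, hea⟩ := exists_pair_ne_ne (by omega) a
  obtain ⟨Mde, hMde, hMdeverts⟩ := h.2 d e hde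
  have haMde : a ∈ Mde.verts := by
    rw [hMdeverts]
    simp only [Set.mem_compl_iff, Set.mem_insert_iff, Set.mem_singleton_iff]
    push_neg
    exact ⟨fun hh => hda hh.symm, fun hh => hea hh.symm⟩
  obtain ⟨c, hc, -⟩ := hMde haMde
  have hcX : c ∈ X := hXclosed Mde a c haX hc
  have hca : c ≠ a := fun hh => B.loopless.irrefl a (hh ▸ (Mde.adj_sub hc)).symm
  have hcb : c ≠ b := fun hh => hbX (hh ▸ hcX)
  -- two matchings
  obtain ⟨M1, hM1, hM1v⟩ := h.2 a b hne
  obtain ⟨M2, hM2, hM2v⟩ := h.2 a c (fun hh => hca hh.symm)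
  have hev1 : Even (M1.verts ∩ X).ncard :=
    even_matching_inter hM1 (fun s t hs hst => hXclosed M1 s t hs hst)
  have hev2 : Even (M2.verts ∩ X).ncard :=
    even_matching_inter hM2 (fun s t hs hst => hXclosed M2 s t hs hst)
  have he1 : M1.verts ∩ X = X \ {a} := by
    rw [hM1v]
    ext w
    simp only [Set.mem_inter_iff, Set.mem_compl_iff, Set.mem_insert_iff,
      Set.mem_singleton_iff, Set.mem_diff]
    constructor
    · rintro ⟨hw, hwX⟩; push_neg at hw; exact ⟨hwX, hw.1⟩
    · rintro ⟨hwX, hwa⟩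
      exact ⟨by push_neg; exact ⟨hwa, fun hh => hbX (hh ▸ hwX)⟩, hwX⟩
  have he2 : M2.verts ∩ X = X \ {a, c} := by
    rw [hM2v]
    ext w
    simp only [Set.mem_inter_iff, Set.mem_compl_iff, Set.mem_insert_iff,
      Set.mem_singleton_iff, Set.mem_diff]
    tauto
  rw [he1] at hev1
  rw [he2] at hev2
  have hsplit : X \ {a} = insert c (X \ {a, c}) := by
    ext w
    simp only [Set.mem_diff, Set.mem_singleton_iff, Set.mem_insert_iff]
    constructor
    · rintro ⟨hwX, hwa⟩
      by_cases hwc : w = c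
      · exact Or.inl hwc
      · exact Or.inr ⟨hwX, by tauto⟩
    · rintro (rfl | ⟨hwX, hw⟩)
      · exact ⟨hcX, hca⟩
      · exact ⟨hwX, fun hh => hw (Or.inl hh)⟩
  have hcnot : c ∉ X \ {a, c} := by simp
  rw [hsplit, Set.ncard_insert_of_notMem hcnot (Set.toFinite _)] at hev1
  rw [Nat.even_iff] at hev1 hev2
  omega

end BicritAux


/-- If `{u, v}` is a 2-vertex cut of a bicritical graph `G` and `uv ∈ E(G)`, then `G − uv`
is bicritical and the edge `uv` is removable in `G`. -/
theorem bicritical_twoCut_edge_deletable_and_removable {V : Type*} [Fintype V]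
    (G : SimpleGraph V) (u v : V) (hbc : Bicritical G) (hcut : IsTwoCut G u v)
    (hadj : G.Adj u v) :
    Bicritical (G.deleteEdges {s(u, v)}) ∧ MatchingCovered (G.deleteEdges {s(u, v)}) := by
  classical
  obtain ⟨hcard4, hbcf⟩ := hbc
  obtain ⟨huvne, hdisc⟩ := hcut
  have hvune : v ≠ u := huvne.symm
  have hcardF : 4 ≤ Fintype.card V := by rwa [Nat.card_eq_fintype_card] at hcard4
  set H := BicritAux.cutSide G u v with hH
  -- the matching for the pair (u, v)
  obtain ⟨MH, hMH, hMHv⟩ := hbcf u v huvne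
  have hmem : ∀ (r s w : V), w ∈ ({r, s}ᶜ : Set V) ↔ w ≠ r ∧ w ≠ s := by
    intro r s w
    simp [not_or]
  -- a pair of vertices outside {u, v} which are not reachable in H
  obtain ⟨p, q, hp, hq, hpq⟩ :
      ∃ p q : V, p ∈ ({u, v}ᶜ : Set V) ∧ q ∈ ({u, v}ᶜ : Set V) ∧ ¬ H.Reachable p q := by
    by_contra hcon
    push_neg at hcon
    have hne : ({u, v}ᶜ : Set V).Nonempty := by
      by_contra hemp
      rw [Set.not_nonempty_iff_eq_empty] at hemp
      have huniv : ({u, v} : Set V) = Set.univ := by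
        rw [← Set.compl_empty_iff, hemp]
      have : (Set.univ : Set V).ncard ≤ ({u, v} : Set V).ncard := by
        rw [huniv]
      have h2 : ({u, v} : Set V).ncard ≤ 2 := by
        apply (Set.ncard_insert_le u {v}).trans
        simp [Set.ncard_singleton]
      rw [Set.ncard_univ, Nat.card_eq_fintype_card] at this
      omega
    haveI : Nonempty ({u, v}ᶜ : Set V) := hne.to_subtype
    apply hdisc
    rw [SimpleGraph.connected_iff]
    refine ⟨?_, inferInstance⟩
    rintro ⟨a, ha⟩ ⟨b, hb⟩
    obtain ⟨w⟩ := hcon a b ha hb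
    exact BicritAux.cutSide_lift w ha hb
  -- basic facts about H and reachability sets
  have hHadj : ∀ {a c : V}, H.Adj a c ↔ G.Adj a c ∧ a ≠ u ∧ a ≠ v ∧ c ≠ u ∧ c ≠ v :=
    Iff.rfl
  -- the key statement : every pair has a matching in G - uv
  have key : ∀ x y : V, x ≠ y →
      ∃ M : (G.deleteEdges {s(u, v)}).Subgraph, M.IsMatching ∧ M.verts = ({x, y}ᶜ : Set V) := by
    intro x y hxy
    obtain ⟨N, hN, hNv⟩ := hbcf x y hxy
    by_cases hcase : u = x ∨ u = y ∨ v = x ∨ v = y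
    · -- u or v is removed, so N cannot use the edge uv
      have hNuv : ¬ N.Adj u v := by
        intro hA
        have hu' : u ∈ N.verts := N.edge_vert hA
        have hv' : v ∈ N.verts := N.edge_vert (N.adj_symm hA)
        rw [hNv] at hu' hv'
        simp only [Set.mem_compl_iff, Set.mem_insert_iff, Set.mem_singleton_iff, not_or] at hu' hv'
        rcases hcase with h | h | h | h
        · exact hu'.1 h
        · exact hu'.2 h
        · exact hv'.1 h
        · exact hv'.2 h
      exact ⟨BicritAux.toDeleted G u v N hNuv, BicritAux.toDeleted_isMatching hN hNuv, hNv⟩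
    · push_neg at hcase
      obtain ⟨hux, huy, hvx, hvy⟩ := hcase
      by_cases hNuv : N.Adj u v
      · -- the hard case: N uses the edge uv
        have hxu : x ≠ u := fun h => hux h.symm
        have hxv : x ≠ v := fun h => hvx h.symm
        have hyu : y ≠ u := fun h => huy h.symm
        have hyv : y ≠ v := fun h => hvy h.symm
        have huN : u ∈ N.verts := by rw [hNv, hmem]; exact ⟨hux, huy⟩
        have hvN : v ∈ N.verts := by rw [hNv, hmem]; exact ⟨hvx, hvy⟩
        obtain ⟨wu, hwu, huuniq⟩ := hN huN
        have huuniq' : ∀ a, N.Adj u a → a = v :=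
          fun a ha => (huuniq a ha).trans (huuniq v hNuv).symm
        obtain ⟨wv, hwv, hvuniq⟩ := hN hvN
        have hvuniq' : ∀ a, N.Adj v a → a = u :=
          fun a ha => (hvuniq a ha).trans (hvuniq u (N.adj_symm hNuv)).symm
        -- N0 : N with the edge uv removed
        have hN0closure : ∀ a c, a ∈ ({u, v}ᶜ : Set V) → N.Adj a c → c ∈ ({u, v}ᶜ : Set V) := by
          intro a c ha hac
          rw [hmem] at ha ⊢
          constructor
          · rintro rfl; exact ha.2 (huuniq' a (N.adj_symm hac))
          · rintro rfl; exact ha.1 (hvuniq' a (N.adj_symm hac))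
        set N0 := BicritAux.restrictSet N ({u, v}ᶜ : Set V) with hN0def
        have hN0 : N0.IsMatching := BicritAux.restrictSet_isMatching hN hN0closure
        have hN0v : N0.verts = ({x, y}ᶜ : Set V) ∩ ({u, v}ᶜ : Set V) := by
          show N.verts ∩ _ = _
          rw [hNv]
        -- y is H-reachable from x
        have hreach_xy : H.Reachable x y := by
          by_contra hnxy
          have hCu : ¬ H.Reachable x u := fun h => BicritAux.cutSide_isolated_u hxu h
          have hCv : ¬ H.Reachable x v := fun h => BicritAux.cutSide_isolated_v hxv h
          set C : Set V := {w | H.Reachable x w} with hC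
          have hxC : x ∈ C := Reachable.refl x
          have hCmem : ∀ {w}, w ∈ C → w ≠ u ∧ w ≠ v := by
            intro w hw
            constructor
            · rintro rfl; exact hCu hw
            · rintro rfl; exact hCv hw
          have hCclosedH : ∀ {a c}, a ∈ C → H.Adj a c → c ∈ C := fun ha h => ha.trans h.reachable
          have hMHC : ∀ a c, a ∈ C → MH.Adj a c → c ∈ C := by
            intro a c ha hac
            have hcV : c ∈ MH.verts := MH.edge_vert (MH.adj_symm hac)
            rw [hMHv, hmem] at hcV
            exact hCclosedH ha ⟨MH.adj_sub hac, (hCmem ha).1, (hCmem ha).2, hcV.1, hcV.2⟩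
          have hCeven : Even C.ncard := by
            have h1 := BicritAux.even_matching_inter hMH hMHC
            rwa [hMHv, Set.inter_eq_self_of_subset_right
              (fun w hw => by rw [hmem]; exact hCmem hw)] at h1
          have hN0C : ∀ a c, a ∈ C → N0.Adj a c → c ∈ C := by
            intro a c ha hac
            obtain ⟨hNac, haS, hcS⟩ := hac
            rw [hmem] at hcS
            exact hCclosedH ha ⟨N.adj_sub hNac, (hCmem ha).1, (hCmem ha).2, hcS.1, hcS.2⟩
          have hev2 := BicritAux.even_matching_inter hN0 hN0C
          have hset : N0.verts ∩ C = C \ {x} := by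
            rw [hN0v]
            ext w
            simp only [Set.mem_inter_iff, Set.mem_diff, Set.mem_singleton_iff, hmem]
            constructor
            · rintro ⟨⟨hw1, _⟩, hwC⟩; exact ⟨hwC, hw1.1⟩
            · rintro ⟨hwC, hwx⟩
              refine ⟨⟨⟨hwx, ?_⟩, hCmem hwC⟩, hwC⟩
              rintro rfl; exact hnxy hwC
          rw [hset] at hev2
          exact BicritAux.even_contra hxC hCeven hev2
        -- choose z on the other side of the cut
        obtain ⟨z, hzu, hzv, hxz⟩ : ∃ z, z ≠ u ∧ z ≠ v ∧ ¬ H.Reachable x z := by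
          rw [hmem] at hp hq
          by_cases hxp : H.Reachable x p
          · exact ⟨q, hq.1, hq.2, fun h => hpq (hxp.symm.trans h)⟩
          · exact ⟨p, hp.1, hp.2, hxp⟩
        set D : Set V := {w | H.Reachable z w} with hD
        have hzD : z ∈ D := Reachable.refl z
        have hDu : u ∉ D := fun h => BicritAux.cutSide_isolated_u hzu h
        have hDv : v ∉ D := fun h => BicritAux.cutSide_isolated_v hzv h
        have hDmem : ∀ {w}, w ∈ D → w ≠ u ∧ w ≠ v := by
          intro w hw
          constructor
          · rintro rfl; exact hDu hw
          · rintro rfl; exact hDv hw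
        have hDclosedH : ∀ {a c}, a ∈ D → H.Adj a c → c ∈ D := fun ha h => ha.trans h.reachable
        have hxD : x ∉ D := fun h => hxz h.symm
        have hyD : y ∉ D := fun h => hxz (hreach_xy.trans h.symm)
        have hDeven : Even D.ncard := by
          have hMHD : ∀ a c, a ∈ D → MH.Adj a c → c ∈ D := by
            intro a c ha hac
            have hcV : c ∈ MH.verts := MH.edge_vert (MH.adj_symm hac)
            rw [hMHv, hmem] at hcV
            exact hDclosedH ha ⟨MH.adj_sub hac, (hDmem ha).1, (hDmem ha).2, hcV.1, hcV.2⟩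
          have h1 := BicritAux.even_matching_inter hMH hMHD
          rwa [hMHv, Set.inter_eq_self_of_subset_right
            (fun w hw => by rw [hmem]; exact hDmem hw)] at h1
        -- B1 : matching for the pair (z, u); the partner b of v lies in D
        obtain ⟨B1, hB1, hB1v⟩ := hbcf z u hzu
        have hvB1 : v ∈ B1.verts := by rw [hB1v, hmem]; exact ⟨hzv.symm, hvune⟩
        obtain ⟨b, hvb, hbuniq⟩ := hB1 hvB1
        have hbD : b ∈ D := by
          by_contra hbD
          have hclo : ∀ a c, a ∈ D → B1.Adj a c → c ∈ D := by
            intro a c haD hac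
            have haV := B1.edge_vert hac
            have hcV := B1.edge_vert (B1.adj_symm hac)
            rw [hB1v, hmem] at haV hcV
            by_cases hcv : c = v
            · subst hcv
              exact absurd ((hbuniq a (B1.adj_symm hac)) ▸ haD) hbD
            · exact hDclosedH haD ⟨B1.adj_sub hac, haV.2, (hDmem haD).2, hcV.2, hcv⟩
          have hev := BicritAux.even_matching_inter hB1 hclo
          have hseteq : B1.verts ∩ D = D \ {z} := by
            rw [hB1v]
            ext w
            simp only [Set.mem_inter_iff, Set.mem_diff, Set.mem_singleton_iff, hmem]
            constructor
            · rintro ⟨⟨h1, _⟩, h3⟩; exact ⟨h3, h1⟩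
            · rintro ⟨h1, h2⟩; exact ⟨⟨h2, (hDmem h1).1⟩, h1⟩
          rw [hseteq] at hev
          exact BicritAux.even_contra hzD hDeven hev
        have hGvb : G.Adj v b := B1.adj_sub hvb
        have hbu : b ≠ u := (hDmem hbD).1
        have hbv : b ≠ v := (hDmem hbD).2
        -- B2 : matching for the pair (b, v); the partner w2 of u lies in D
        obtain ⟨B2, hB2, hB2v⟩ := hbcf b v hbv
        have huB2 : u ∈ B2.verts := by rw [hB2v, hmem]; exact ⟨hbu.symm, huvne⟩
        obtain ⟨w2, hw2, hw2uniq⟩ := hB2 huB2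
        have hw2D : w2 ∈ D := by
          by_contra hw2D
          have hclo : ∀ a c, a ∈ D → B2.Adj a c → c ∈ D := by
            intro a c haD hac
            have hcV := B2.edge_vert (B2.adj_symm hac)
            rw [hB2v, hmem] at hcV
            by_cases hcu : c = u
            · subst hcu
              exact absurd ((hw2uniq a (B2.adj_symm hac)) ▸ haD) hw2D
            · exact hDclosedH haD ⟨B2.adj_sub hac, (hDmem haD).1, (hDmem haD).2, hcu, hcV.2⟩
          have hev := BicritAux.even_matching_inter hB2 hclo
          have hseteq : B2.verts ∩ D = D \ {b} := by
            rw [hB2v]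
            ext w
            simp only [Set.mem_inter_iff, Set.mem_diff, Set.mem_singleton_iff, hmem]
            constructor
            · rintro ⟨⟨h1, _⟩, h3⟩; exact ⟨h3, h1⟩
            · rintro ⟨h1, h2⟩; exact ⟨⟨h2, (hDmem h1).2⟩, h1⟩
          rw [hseteq] at hev
          exact BicritAux.even_contra hbD hDeven hev
        -- M1 : B2 restricted to D ∪ {u}
        have hM1clo : ∀ a c, a ∈ D ∪ {u} → B2.Adj a c → c ∈ D ∪ {u} := by
          intro a c ha hac
          rcases ha with haD | hau
          · by_cases hcu : c = u
            · exact Or.inr hcu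
            · have hcV := B2.edge_vert (B2.adj_symm hac)
              rw [hB2v, hmem] at hcV
              exact Or.inl (hDclosedH haD
                ⟨B2.adj_sub hac, (hDmem haD).1, (hDmem haD).2, hcu, hcV.2⟩)
          · have hau' : a = u := hau
            subst hau'
            refine Or.inl ?_
            rw [hw2uniq c hac]
            exact hw2D
        set M1 := BicritAux.restrictSet B2 (D ∪ {u}) with hM1def
        have hM1 : M1.IsMatching := BicritAux.restrictSet_isMatching hB2 hM1clo
        have hM1v : M1.verts = (D \ {b}) ∪ {u} := by
          show B2.verts ∩ (D ∪ {u}) = _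
          rw [hB2v]
          ext w
          simp only [Set.mem_inter_iff, Set.mem_union, Set.mem_diff, Set.mem_singleton_iff, hmem]
          constructor
          · rintro ⟨⟨h1, _⟩, h3 | h4⟩
            · exact Or.inl ⟨h3, h1⟩
            · exact Or.inr h4
          · rintro (⟨h1, h2⟩ | h3)
            · exact ⟨⟨h2, (hDmem h1).2⟩, Or.inl h1⟩
            · subst h3
              exact ⟨⟨hbu.symm, huvne⟩, Or.inr rfl⟩
        -- M2 : the single edge vb
        have hM2 : (G.subgraphOfAdj hGvb).IsMatching :=
          SimpleGraph.Subgraph.IsMatching.subgraphOfAdj hGvb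
        -- R2 : N0 restricted to Dᶜ
        have hR2clo : ∀ a c, a ∈ Dᶜ → N0.Adj a c → c ∈ Dᶜ := by
          intro a c ha hac hc
          obtain ⟨hNac, haS, hcS⟩ := hac
          rw [hmem] at haS hcS
          exact ha (hDclosedH hc ⟨(N.adj_sub hNac).symm, hcS.1, hcS.2, haS.1, haS.2⟩)
        set R2 := BicritAux.restrictSet N0 Dᶜ with hR2def
        have hR2 : R2.IsMatching := BicritAux.restrictSet_isMatching hN0 hR2clo
        have hR2v : R2.verts = (({x, y}ᶜ : Set V) ∩ ({u, v}ᶜ : Set V)) ∩ Dᶜ := by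
          show N0.verts ∩ Dᶜ = _
          rw [hN0v]
        -- assemble
        have hdisj12 : Disjoint M1.support (G.subgraphOfAdj hGvb).support := by
          rw [hM1.support_eq_verts, hM2.support_eq_verts, hM1v]
          rw [Set.disjoint_left]
          intro w hw1 hw2
          simp only [SimpleGraph.subgraphOfAdj_verts, Set.mem_insert_iff,
            Set.mem_singleton_iff] at hw2
          rcases hw1 with ⟨hwD, hwb⟩ | hwu
          · rcases hw2 with rfl | rfl
            · exact hDv hwD
            · exact hwb rfl
          · have hwu' : w = u := hwu
            rcases hw2 with rfl | rfl
            · exact hvune hwu'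
            · exact hbu hwu'
        have hM12 : (M1 ⊔ G.subgraphOfAdj hGvb).IsMatching := hM1.sup hM2 hdisj12
        have hdisj123 : Disjoint (M1 ⊔ G.subgraphOfAdj hGvb).support R2.support := by
          rw [hM12.support_eq_verts, hR2.support_eq_verts, hR2v]
          rw [Set.disjoint_left]
          intro w hw1 hw2
          obtain ⟨⟨hw2a, hw2b⟩, hw2c⟩ := hw2
          rw [hmem] at hw2b
          simp only [SimpleGraph.Subgraph.verts_sup, Set.mem_union] at hw1
          rcases hw1 with hw1 | hw1
          · rw [hM1v] at hw1
            rcases hw1 with ⟨hwD, _⟩ | hwu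
            · exact hw2c hwD
            · exact hw2b.1 hwu
          · simp only [SimpleGraph.subgraphOfAdj_verts, Set.mem_insert_iff,
              Set.mem_singleton_iff] at hw1
            rcases hw1 with rfl | rfl
            · exact hw2b.2 rfl
            · exact hw2c hbD
        have hMfin : ((M1 ⊔ G.subgraphOfAdj hGvb) ⊔ R2).IsMatching := hM12.sup hR2 hdisj123
        have hMfinv : ((M1 ⊔ G.subgraphOfAdj hGvb) ⊔ R2).verts = ({x, y}ᶜ : Set V) := by
          ext w
          simp only [SimpleGraph.Subgraph.verts_sup, Set.mem_union, hM1v, hR2v,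
            SimpleGraph.subgraphOfAdj_verts, Set.mem_insert_iff, Set.mem_singleton_iff,
            Set.mem_inter_iff, Set.mem_diff, Set.mem_compl_iff, hmem]
          constructor
          · intro hw
            rcases hw with (hw | hw) | hw
            · rcases hw with ⟨hwD, _⟩ | rfl
              · constructor
                · rintro rfl; exact hxD hwD
                · rintro rfl; exact hyD hwD
              · exact ⟨hux, huy⟩
            · rcases hw with rfl | rfl
              · exact ⟨hvx, hvy⟩
              · constructor
                · rintro rfl; exact hxD hbD
                · rintro rfl; exact hyD hbD
            · exact hw.1.1
          · intro hw
            by_cases hwD : w ∈ D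
            · by_cases hwb : w = b
              · exact Or.inl (Or.inr (Or.inr hwb))
              · exact Or.inl (Or.inl (Or.inl ⟨hwD, hwb⟩))
            · by_cases hwu : w = u
              · exact Or.inl (Or.inl (Or.inr hwu))
              · by_cases hwv : w = v
                · exact Or.inl (Or.inr (Or.inl hwv))
                · exact Or.inr ⟨⟨hw, ⟨hwu, hwv⟩⟩, hwD⟩
        have hMuv : ¬ ((M1 ⊔ G.subgraphOfAdj hGvb) ⊔ R2).Adj u v := by
          intro h
          rcases h with (h | h) | h
          · rcases h.2.2 with hvD | hvu
            · exact hDv hvD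
            · exact hvune hvu
          · rw [SimpleGraph.subgraphOfAdj_adj, Sym2.eq_iff] at h
            rcases h with ⟨h1, _⟩ | ⟨_, h2⟩
            · exact hvune h1
            · exact hbu h2
          · have h2 := h.1.2.1
            rw [hmem] at h2
            exact h2.1 rfl
        exact ⟨BicritAux.toDeleted G u v _ hMuv,
          BicritAux.toDeleted_isMatching hMfin hMuv, hMfinv⟩
      · exact ⟨BicritAux.toDeleted G u v N hNuv, BicritAux.toDeleted_isMatching hN hNuv, hNv⟩
  have hbc' : Bicritical (G.deleteEdges {s(u, v)}) := ⟨hcard4, key⟩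
  refine ⟨hbc', ?_, ?_, ?_⟩
  · omega
  · exact BicritAux.bicritical_connected hbc'
  · intro e he
    induction e using Sym2.ind with
    | _ a b =>
      have hab : (G.deleteEdges {s(u, v)}).Adj a b := he
      obtain ⟨M, hM, hMv⟩ := key a b hab.ne
      have hdisj : Disjoint M.support ((G.deleteEdges {s(u, v)}).subgraphOfAdj hab).support := by
        rw [hM.support_eq_verts, (SimpleGraph.Subgraph.IsMatching.subgraphOfAdj hab).support_eq_verts]
        rw [hMv]
        rw [Set.disjoint_left]
        intro w hw hw2
        exact hw hw2
      refine ⟨M ⊔ (G.deleteEdges {s(u, v)}).subgraphOfAdj hab,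
        ⟨hM.sup (SimpleGraph.Subgraph.IsMatching.subgraphOfAdj hab) hdisj, ?_⟩, ?_⟩
      · intro w
        show w ∈ M.verts ∪ _
        rw [hMv]
        by_cases hwa : w = a
        · exact Or.inr (by simp [hwa])
        · by_cases hwb : w = b
          · exact Or.inr (by simp [hwb])
          · exact Or.inl (by simp [hwa, hwb])
      · rw [SimpleGraph.Subgraph.mem_edgeSet]
        exact Or.inr (by simp)
end

section
/- If G is a minimal bicritical graph, then every 2-vertex cut {u, v} of G is an independent set, i.e., uv is not an edge of G. -/
open SimpleGraph

namespace MinBicritAux3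

variable {V : Type*} {G : SimpleGraph V}

private lemma aux_eq_of_adj {M : G.Subgraph} (hM : M.IsMatching) {a b c : V}
    (hab : M.Adj a b) (hac : M.Adj a c) : b = c := by
  obtain ⟨w, _, hw⟩ := hM (M.edge_vert hab)
  rw [hw b hab, hw c hac]

private lemma aux_induce {M : G.Subgraph} (hM : M.IsMatching) {A : Set V}
    (hA : A ⊆ M.verts) (hcl : ∀ a ∈ A, ∀ b, M.Adj a b → b ∈ A) :
    (M.induce A).IsMatching := by
  intro z hz
  obtain ⟨w, hw, hun⟩ := hM (hA hz)
  exact ⟨w, ⟨hz, hcl z hz w hw, hw⟩, fun y hy => hun y hy.2.2⟩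

private lemma aux_even [Fintype V] {M : G.Subgraph} (hM : M.IsMatching) {A : Set V}
    (hA : A ⊆ M.verts) (hcl : ∀ a ∈ A, ∀ b, M.Adj a b → b ∈ A) :
    Even A.ncard := by
  classical
  have h := (aux_induce hM hA hcl).even_card
  simp only [Subgraph.induce_verts] at h
  rwa [Set.ncard_eq_toFinset_card' A]

private lemma aux_parity [Fintype V] {A : Set V} {z : V} (hz : z ∈ A)
    (h1 : Even A.ncard) (h2 : Even ((A \ {z}).ncard)) : False := by
  have hcard : (A \ {z}).ncard = A.ncard - 1 :=
    Set.ncard_diff_singleton_of_mem hz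
  have hpos : 0 < A.ncard := (Set.ncard_pos (Set.toFinite A)).mpr ⟨z, hz⟩
  rw [hcard] at h2
  have hodd : Odd A.ncard := by
    have h3 := h2.add_one
    have h4 : A.ncard - 1 + 1 = A.ncard := Nat.succ_pred_eq_of_pos hpos
    rwa [h4] at h3
  exact (Nat.not_odd_iff_even.mpr h1) hodd

private lemma case_same [Fintype V] {u v : V} (huvne : u ≠ v)
    (hbc : ∀ a b : V, a ≠ b →
      ∃ M : G.Subgraph, M.IsMatching ∧ M.verts = ({a, b}ᶜ : Set V))
    {P Q : Set V} (hPQ : P ∪ Q = ({u, v}ᶜ : Set V)) (hdisj : Disjoint P Q)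
    (hnoedge : ∀ a ∈ P, ∀ b ∈ Q, ¬ G.Adj a b)
    (hQne : Q.Nonempty) (hPe : Even P.ncard)
    {x y : V} (hx : x ∈ P) (hy : y ∈ P) (hxy : x ≠ y) :
    ∃ M : G.Subgraph, M.IsMatching ∧ M.verts = ({x, y}ᶜ : Set V) ∧ ¬ M.Adj u v := by
  have hPc : P ⊆ ({u, v}ᶜ : Set V) := hPQ ▸ Set.subset_union_left
  have hQc : Q ⊆ ({u, v}ᶜ : Set V) := hPQ ▸ Set.subset_union_right
  have huP : u ∉ P := fun h => hPc h (by simp)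
  have hvP : v ∉ P := fun h => hPc h (by simp)
  have huQ : u ∉ Q := fun h => hQc h (by simp)
  have hvQ : v ∉ Q := fun h => hQc h (by simp)
  have hdisj' := Set.disjoint_left.mp hdisj
  obtain ⟨M, hM, hMv⟩ := hbc x y hxy
  by_cases hMuv : M.Adj u v
  swap
  · exact ⟨M, hM, hMv, hMuv⟩
  -- `M` matches `u` with `v`; all other `M`-edges stay within `P` or `Q`.
  have hP'sub : (P \ {x, y} : Set V) ⊆ M.verts := by
    intro a ha; rw [hMv]; exact ha.2
  have hP'cl : ∀ a ∈ (P \ {x, y} : Set V), ∀ b, M.Adj a b → b ∈ (P \ {x, y} : Set V) := by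
    rintro a ⟨haP, haxy⟩ b hab
    have hbverts : b ∈ ({x, y}ᶜ : Set V) := hMv ▸ M.edge_vert (M.adj_symm hab)
    have hbu : b ≠ u := by
      rintro rfl
      have h2 := aux_eq_of_adj hM hMuv (M.adj_symm hab)
      exact hvP (by rwa [← h2] at haP)
    have hbv : b ≠ v := by
      rintro rfl
      have h2 := aux_eq_of_adj hM (M.adj_symm hMuv) (M.adj_symm hab)
      exact huP (by rwa [← h2] at haP)
    have hbPQ : b ∈ P ∪ Q := by rw [hPQ]; simp [hbu, hbv]
    rcases hbPQ with hbP | hbQ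
    · exact ⟨hbP, hbverts⟩
    · exact absurd (M.adj_sub hab) (hnoedge a haP b hbQ)
  have hMP : (M.induce (P \ {x, y})).IsMatching := aux_induce hM hP'sub hP'cl
  obtain ⟨w, hwQ⟩ := hQne
  have huw : u ≠ w := fun h => huQ (h ▸ hwQ)
  obtain ⟨N, hN, hNv⟩ := hbc u w huw
  have hvN : v ∈ N.verts := by
    rw [hNv]
    intro hmem
    rcases hmem with rfl | hmem
    · exact huvne rfl
    · exact hvQ (Set.mem_singleton_iff.mp hmem ▸ hwQ)
  obtain ⟨v', hvv', -⟩ := hN hvN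
  have hvv'ne : v ≠ v' := (N.adj_sub hvv').ne
  have hv'verts : v' ∈ ({u, w}ᶜ : Set V) := hNv ▸ N.edge_vert (N.adj_symm hvv')
  have hv'u : v' ≠ u := fun h => hv'verts (by simp [h])
  have hv'w : v' ≠ w := fun h => hv'verts (by simp [h])
  have hv'Q : v' ∈ Q := by
    have hv'PQ : v' ∈ P ∪ Q := by rw [hPQ]; simp [hv'u, hvv'ne.symm]
    rcases hv'PQ with hv'P | h
    swap
    · exact h
    exfalso
    refine aux_parity hv'P hPe (aux_even hN ?_ ?_)
    · intro a ha
      rw [hNv]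
      intro hmem
      rcases hmem with rfl | hmem
      · exact huP ha.1
      · exact hdisj' ha.1 (Set.mem_singleton_iff.mp hmem ▸ hwQ)
    · rintro a ⟨haP, hav'⟩ b hab
      have hbverts : b ∈ ({u, w}ᶜ : Set V) := hNv ▸ N.edge_vert (N.adj_symm hab)
      have hbu : b ≠ u := fun h => hbverts (by simp [h])
      have hbv : b ≠ v := by
        rintro rfl
        have h2 := aux_eq_of_adj hN hvv' (N.adj_symm hab)
        exact hav' (Set.mem_singleton_iff.mpr h2.symm)
      have hbPQ : b ∈ P ∪ Q := by rw [hPQ]; simp [hbu, hbv]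
      rcases hbPQ with hbP | hbQ
      · refine ⟨hbP, ?_⟩
        intro hmem
        have hbeq : b = v' := Set.mem_singleton_iff.mp hmem
        subst hbeq
        have h2 := aux_eq_of_adj hN (N.adj_symm hvv') (N.adj_symm hab)
        exact hvP (by rwa [← h2] at haP)
      · exact absurd (N.adj_sub hab) (hnoedge a haP b hbQ)
  obtain ⟨N', hN', hN'v⟩ := hbc v v' hvv'ne
  have huN' : u ∈ N'.verts := by
    rw [hN'v]
    intro hmem
    rcases hmem with rfl | hmem
    · exact huvne rfl
    · exact huQ (Set.mem_singleton_iff.mp hmem ▸ hv'Q)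
  obtain ⟨u', huu', -⟩ := hN' huN'
  have hu'verts : u' ∈ ({v, v'}ᶜ : Set V) := hN'v ▸ N'.edge_vert (N'.adj_symm huu')
  have hu'v : u' ≠ v := fun h => hu'verts (by simp [h])
  have hu'v' : u' ≠ v' := fun h => hu'verts (by simp [h])
  have hu'u : u' ≠ u := (N'.adj_sub huu').ne'
  have hu'Q : u' ∈ Q := by
    have h1 : u' ∈ P ∪ Q := by rw [hPQ]; simp [hu'u, hu'v]
    rcases h1 with hu'P | h
    swap
    · exact h
    exfalso
    refine aux_parity hu'P hPe (aux_even hN' ?_ ?_)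
    · intro a ha
      rw [hN'v]
      intro hmem
      rcases hmem with rfl | hmem
      · exact hvP ha.1
      · exact hdisj' ha.1 (Set.mem_singleton_iff.mp hmem ▸ hv'Q)
    · rintro a ⟨haP, hau'⟩ b hab
      have hbverts : b ∈ ({v, v'}ᶜ : Set V) := hN'v ▸ N'.edge_vert (N'.adj_symm hab)
      have hbv : b ≠ v := fun h => hbverts (by simp [h])
      have hbu : b ≠ u := by
        rintro rfl
        have h2 := aux_eq_of_adj hN' huu' (N'.adj_symm hab)
        exact hau' (Set.mem_singleton_iff.mpr h2.symm)
      have hbPQ : b ∈ P ∪ Q := by rw [hPQ]; simp [hbu, hbv]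
      rcases hbPQ with hbP | hbQ
      · refine ⟨hbP, ?_⟩
        intro hmem
        have hbeq : b = u' := Set.mem_singleton_iff.mp hmem
        subst hbeq
        have h2 := aux_eq_of_adj hN' (N'.adj_symm huu') (N'.adj_symm hab)
        exact huP (by rwa [← h2] at haP)
      · exact absurd (N'.adj_sub hab) (hnoedge a haP b hbQ)
  have hQ'sub : (Q \ {v', u'} : Set V) ⊆ N'.verts := by
    rintro a ⟨haQ, hamem⟩
    rw [hN'v]
    intro hmem
    rcases hmem with rfl | hmem
    · exact hvQ haQ
    · exact hamem (by simp [Set.mem_singleton_iff.mp hmem])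
  have hQ'cl : ∀ a ∈ (Q \ {v', u'} : Set V), ∀ b, N'.Adj a b → b ∈ (Q \ {v', u'} : Set V) := by
    rintro a ⟨haQ, hamem⟩ b hab
    have hbverts : b ∈ ({v, v'}ᶜ : Set V) := hN'v ▸ N'.edge_vert (N'.adj_symm hab)
    have hbv : b ≠ v := fun h => hbverts (by simp [h])
    have hbv' : b ≠ v' := fun h => hbverts (by simp [h])
    have hbu : b ≠ u := by
      rintro rfl
      have h2 := aux_eq_of_adj hN' huu' (N'.adj_symm hab)
      exact hamem (by simp [h2.symm])
    have hbu' : b ≠ u' := by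
      rintro rfl
      have h2 := aux_eq_of_adj hN' (N'.adj_symm huu') (N'.adj_symm hab)
      exact huQ (by rwa [← h2] at haQ)
    have hbPQ : b ∈ P ∪ Q := by rw [hPQ]; simp [hbu, hbv]
    rcases hbPQ with hbP | hbQ
    · exact absurd ((N'.adj_sub hab).symm) (hnoedge b hbP a haQ)
    · exact ⟨hbQ, by simp [hbv', hbu']⟩
  have hNQ : (N'.induce (Q \ {v', u'})).IsMatching := aux_induce hN' hQ'sub hQ'cl
  have e1 : G.Adj u u' := N'.adj_sub huu'
  have e2 : G.Adj v v' := N.adj_sub hvv'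
  have mB := Subgraph.IsMatching.subgraphOfAdj e1
  have mC := Subgraph.IsMatching.subgraphOfAdj e2
  -- set-level disjointness
  have d1 : Disjoint (P \ {x, y} : Set V) ({u, u'} : Set V) := by
    rw [Set.disjoint_left]
    rintro z ⟨hzP, -⟩ hz2
    rcases hz2 with rfl | hz2
    · exact huP hzP
    · exact hdisj' hzP (Set.mem_singleton_iff.mp hz2 ▸ hu'Q)
  have d2 : Disjoint ((P \ {x, y} : Set V) ∪ {u, u'}) ({v, v'} : Set V) := by
    rw [Set.disjoint_left]
    rintro z hz1 hz2
    rcases hz2 with rfl | hz2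
    · rcases hz1 with ⟨hzP, -⟩ | hz1
      · exact hvP hzP
      · rcases hz1 with h | h
        · exact huvne h.symm
        · exact hu'v (Set.mem_singleton_iff.mp h).symm
    · have hzv' : z = v' := Set.mem_singleton_iff.mp hz2
      subst hzv'
      rcases hz1 with ⟨hzP, -⟩ | hz1
      · exact hdisj' hzP hv'Q
      · rcases hz1 with h | h
        · exact hv'u h
        · exact hu'v' (Set.mem_singleton_iff.mp h).symm
  have d3 : Disjoint (((P \ {x, y} : Set V) ∪ {u, u'}) ∪ {v, v'}) (Q \ {v', u'} : Set V) := by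
    rw [Set.disjoint_left]
    rintro z hz1 ⟨hzQ, hzmem⟩
    rcases hz1 with (⟨hzP, -⟩ | hz) | hz
    · exact hdisj' hzP hzQ
    · rcases hz with rfl | hz
      · exact huQ hzQ
      · exact hzmem (by simp [Set.mem_singleton_iff.mp hz])
    · rcases hz with rfl | hz
      · exact hvQ hzQ
      · exact hzmem (by simp [Set.mem_singleton_iff.mp hz])
  -- subgraph-support disjointness
  have dd1 : Disjoint (M.induce (P \ {x, y})).support (G.subgraphOfAdj e1).support := by
    rw [hMP.support_eq_verts, mB.support_eq_verts, Subgraph.induce_verts, subgraphOfAdj_verts]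
    exact d1
  have m1 := hMP.sup mB dd1
  have dd2 : Disjoint (M.induce (P \ {x, y}) ⊔ G.subgraphOfAdj e1).support
      (G.subgraphOfAdj e2).support := by
    rw [m1.support_eq_verts, mC.support_eq_verts]
    simp only [Subgraph.verts_sup, Subgraph.induce_verts, subgraphOfAdj_verts]
    exact d2
  have m2 := m1.sup mC dd2
  have dd3 : Disjoint (M.induce (P \ {x, y}) ⊔ G.subgraphOfAdj e1 ⊔ G.subgraphOfAdj e2).support
      (N'.induce (Q \ {v', u'})).support := by
    rw [m2.support_eq_verts, hNQ.support_eq_verts]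
    simp only [Subgraph.verts_sup, Subgraph.induce_verts, subgraphOfAdj_verts]
    exact d3
  have m3 := m2.sup hNQ dd3
  refine ⟨M.induce (P \ {x, y}) ⊔ G.subgraphOfAdj e1 ⊔ G.subgraphOfAdj e2 ⊔
    N'.induce (Q \ {v', u'}), m3, ?_, ?_⟩
  · -- verts
    simp only [Subgraph.verts_sup, Subgraph.induce_verts, subgraphOfAdj_verts]
    ext z
    simp only [Set.mem_union, Set.mem_diff, Set.mem_insert_iff, Set.mem_singleton_iff,
      Set.mem_compl_iff, not_or]
    constructor
    · rintro (((⟨hzP, hz2⟩ | (rfl | rfl)) | (rfl | rfl)) | ⟨hzQ, hz2⟩)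
      · exact hz2
      · exact ⟨fun h => huP (h ▸ hx), fun h => huP (h ▸ hy)⟩
      · exact ⟨fun h => hdisj' hx (h ▸ hu'Q), fun h => hdisj' hy (h ▸ hu'Q)⟩
      · exact ⟨fun h => hvP (h ▸ hx), fun h => hvP (h ▸ hy)⟩
      · exact ⟨fun h => hdisj' hx (h ▸ hv'Q), fun h => hdisj' hy (h ▸ hv'Q)⟩
      · exact ⟨fun h => hdisj' hx (h ▸ hzQ), fun h => hdisj' hy (h ▸ hzQ)⟩
    · rintro ⟨hzx, hzy⟩
      by_cases hzu : z = u
      · exact Or.inl (Or.inl (Or.inr (Or.inl hzu)))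
      by_cases hzv : z = v
      · exact Or.inl (Or.inr (Or.inl hzv))
      have hzPQ : z ∈ P ∪ Q := by rw [hPQ]; simp [hzu, hzv]
      rcases hzPQ with hzP | hzQ
      · exact Or.inl (Or.inl (Or.inl ⟨hzP, hzx, hzy⟩))
      · by_cases hzv' : z = v'
        · exact Or.inl (Or.inr (Or.inr hzv'))
        by_cases hzu' : z = u'
        · exact Or.inl (Or.inl (Or.inr (Or.inr hzu')))
        · exact Or.inr ⟨hzQ, hzv', hzu'⟩
  · -- does not use the edge uv
    intro hadj
    simp only [Subgraph.sup_adj, Subgraph.induce_adj, subgraphOfAdj_adj] at hadj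
    rcases hadj with ((⟨h1, -, -⟩ | h) | h) | ⟨h1, -, -⟩
    · exact huP h1.1
    · rw [Sym2.eq_iff] at h
      rcases h with ⟨-, h2⟩ | ⟨h2, -⟩
      · exact hu'v h2
      · exact huvne h2
    · rw [Sym2.eq_iff] at h
      rcases h with ⟨h2, -⟩ | ⟨-, h2⟩
      · exact huvne h2.symm
      · exact hv'u h2
    · exact huQ h1.1


private lemma case_trivial {u v x y : V}
    (hbc : ∀ a b : V, a ≠ b →
      ∃ M : G.Subgraph, M.IsMatching ∧ M.verts = ({a, b}ᶜ : Set V))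
    (hxy : x ≠ y) (h : x = u ∨ x = v ∨ y = u ∨ y = v) :
    ∃ M : G.Subgraph, M.IsMatching ∧ M.verts = ({x, y}ᶜ : Set V) ∧ ¬ M.Adj u v := by
  obtain ⟨M, hM, hMv⟩ := hbc x y hxy
  refine ⟨M, hM, hMv, fun huv => ?_⟩
  have hu : u ∈ M.verts := M.edge_vert huv
  have hv : v ∈ M.verts := M.edge_vert (M.adj_symm huv)
  rw [hMv] at hu hv
  rcases h with rfl | rfl | rfl | rfl
  · exact hu (by simp)
  · exact hv (by simp)
  · exact hu (by simp)
  · exact hv (by simp)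


private lemma case_mixed [Fintype V] {u v : V}
    (hbc : ∀ a b : V, a ≠ b →
      ∃ M : G.Subgraph, M.IsMatching ∧ M.verts = ({a, b}ᶜ : Set V))
    {P Q : Set V} (hPQ : P ∪ Q = ({u, v}ᶜ : Set V)) (hdisj : Disjoint P Q)
    (hnoedge : ∀ a ∈ P, ∀ b ∈ Q, ¬ G.Adj a b)
    (hPe : Even P.ncard)
    {x y : V} (hx : x ∈ P) (hy : y ∈ Q) :
    ∃ M : G.Subgraph, M.IsMatching ∧ M.verts = ({x, y}ᶜ : Set V) ∧ ¬ M.Adj u v := by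
  have hPc : P ⊆ ({u, v}ᶜ : Set V) := hPQ ▸ Set.subset_union_left
  have hQc : Q ⊆ ({u, v}ᶜ : Set V) := hPQ ▸ Set.subset_union_right
  have huP : u ∉ P := fun h => hPc h (by simp)
  have hvP : v ∉ P := fun h => hPc h (by simp)
  have huQ : u ∉ Q := fun h => hQc h (by simp)
  have hvQ : v ∉ Q := fun h => hQc h (by simp)
  have hxy : x ≠ y := fun h => (Set.disjoint_left.mp hdisj hx) (h ▸ hy)
  obtain ⟨M, hM, hMv⟩ := hbc x y hxy
  refine ⟨M, hM, hMv, fun huv => ?_⟩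
  refine aux_parity hx hPe (aux_even hM ?_ ?_)
  · intro a ha
    rw [hMv]
    intro hmem
    rcases hmem with rfl | hmem
    · exact ha.2 rfl
    · rw [Set.mem_singleton_iff] at hmem
      exact (Set.disjoint_left.mp hdisj ha.1) (hmem ▸ hy)
  · rintro a ⟨haP, hax⟩ b hab
    have hbverts : b ∈ M.verts := M.edge_vert (M.adj_symm hab)
    rw [hMv] at hbverts
    have hbx : b ≠ x := fun h => hbverts (by simp [h])
    have hbu : b ≠ u := by
      rintro rfl
      have := aux_eq_of_adj hM huv (M.adj_symm hab)
      exact hvP (this ▸ haP)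
    have hbv : b ≠ v := by
      rintro rfl
      have := aux_eq_of_adj hM (M.adj_symm huv) (M.adj_symm hab)
      exact huP (this ▸ haP)
    have hbPQ : b ∈ P ∪ Q := by
      rw [hPQ]
      simp [hbu, hbv]
    rcases hbPQ with hbP | hbQ
    · exact ⟨hbP, hbx⟩
    · exact absurd (M.adj_sub hab) (hnoedge a haP b hbQ)


private lemma aux_transfer {u v : V} (M : G.Subgraph) (hM : M.IsMatching)
    (h : ¬ M.Adj u v) :
    ∃ M' : (G.deleteEdges {s(u,v)}).Subgraph, M'.IsMatching ∧ M'.verts = M.verts := by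
  refine ⟨⟨M.verts, M.Adj, ?_, fun hab => M.edge_vert hab, M.symm⟩,
    fun z hz => hM hz, rfl⟩
  intro a b hab
  rw [SimpleGraph.deleteEdges_adj]
  refine ⟨M.adj_sub hab, ?_⟩
  intro hmem
  rw [Set.mem_singleton_iff, Sym2.eq_iff] at hmem
  rcases hmem with ⟨rfl, rfl⟩ | ⟨rfl, rfl⟩
  · exact h hab
  · exact h (M.adj_symm hab)


end MinBicritAux3




open MinBicritAux3 in
/-- In a minimal bicritical graph, every 2-vertex cut is an independent set. -/
theorem minimalBicritical_twoCut_independent {V : Type*} [Fintype V]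
    (G : SimpleGraph V) (u v : V) (hmin : MinimalBicritical G) (hcut : IsTwoCut G u v) :
    ¬ G.Adj u v := by
  classical
  intro hadj
  obtain ⟨⟨hcard, hbc⟩, hminEdge⟩ := hmin
  obtain ⟨huvne, hdiscon⟩ := hcut
  -- the complement of {u, v} is nonempty
  have hSne : (({u, v}ᶜ : Set V)).Nonempty := by
    by_contra h
    rw [Set.not_nonempty_iff_eq_empty, Set.compl_empty_iff] at h
    have h1 : (Set.univ : Set V).ncard ≤ 2 := by
      rw [← h]
      exact (Set.ncard_insert_le _ _).trans (by simp)
    rw [Set.ncard_univ] at h1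
    omega
  have hnonempty : Nonempty (({u, v}ᶜ : Set V)) := hSne.to_subtype
  rw [SimpleGraph.connected_iff] at hdiscon
  have hnp : ¬ (G.induce (({u, v}ᶜ : Set V))).Preconnected :=
    fun hp => hdiscon ⟨hp, hnonempty⟩
  obtain ⟨p, q, hpq⟩ : ∃ p q : (({u, v}ᶜ : Set V)),
      ¬ (G.induce (({u, v}ᶜ : Set V))).Reachable p q := by
    by_contra h
    push_neg at h
    exact hnp fun a b => h a b
  set A : Set V :=
    {z : V | ∃ hz : z ∈ (({u, v}ᶜ : Set V)), (G.induce (({u, v}ᶜ : Set V))).Reachable p ⟨z, hz⟩}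
    with hA
  have hAS : A ⊆ (({u, v}ᶜ : Set V)) := fun z hz => hz.choose
  have hpA : (p : V) ∈ A := ⟨p.2, Reachable.refl p⟩
  have hqB : (q : V) ∈ (({u, v}ᶜ : Set V)) \ A := by
    refine ⟨q.2, fun h => ?_⟩
    obtain ⟨h1, h2⟩ := h
    exact hpq h2
  have hclA : ∀ a ∈ A, ∀ b ∈ (({u, v}ᶜ : Set V)), G.Adj a b → b ∈ A := by
    rintro a ⟨haS, har⟩ b hbS hab
    refine ⟨hbS, har.trans (Adj.reachable ?_)⟩
    exact hab
  have hunion : A ∪ (({u, v}ᶜ : Set V) \ A) = (({u, v}ᶜ : Set V)) :=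
    Set.union_diff_cancel hAS
  have hdisjAB : Disjoint A (({u, v}ᶜ : Set V) \ A) := Set.disjoint_sdiff_right
  have hnoedgeAB : ∀ a ∈ A, ∀ b ∈ (({u, v}ᶜ : Set V) \ A), ¬ G.Adj a b :=
    fun a ha b hb h => hb.2 (hclA a ha b hb.1 h)
  have hunionBA : (({u, v}ᶜ : Set V) \ A) ∪ A = (({u, v}ᶜ : Set V)) := by
    rw [Set.union_comm]; exact hunion
  have hdisjBA : Disjoint (({u, v}ᶜ : Set V) \ A) A := hdisjAB.symm
  have hnoedgeBA : ∀ a ∈ (({u, v}ᶜ : Set V) \ A), ∀ b ∈ A, ¬ G.Adj a b :=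
    fun a ha b hb h => hnoedgeAB b hb a ha h.symm
  -- parity of the two sides
  obtain ⟨M₀, hM₀, hM₀v⟩ := hbc u v huvne
  have hAe : Even A.ncard := by
    refine aux_even hM₀ (fun z hz => ?_) ?_
    · rw [hM₀v]; exact hAS hz
    · intro a ha b hab
      have hbS : b ∈ (({u, v}ᶜ : Set V)) := hM₀v ▸ M₀.edge_vert (M₀.adj_symm hab)
      exact hclA a ha b hbS (M₀.adj_sub hab)
  have hBe : Even ((({u, v}ᶜ : Set V) \ A).ncard) := by
    refine aux_even hM₀ (fun z hz => ?_) ?_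
    · rw [hM₀v]; exact hz.1
    · rintro a ⟨haS, haA⟩ b hab
      have hbS : b ∈ (({u, v}ᶜ : Set V)) := hM₀v ▸ M₀.edge_vert (M₀.adj_symm hab)
      refine ⟨hbS, fun hbA => ?_⟩
      exact haA (hclA b hbA a haS (M₀.adj_sub hab).symm)
  -- minimality: deleting uv must destroy bicriticality
  refine hminEdge s(u, v) hadj ⟨hcard, ?_⟩
  intro x y hxy
  -- produce a matching of `G` on {x,y}ᶜ avoiding the edge uv, then transfer it
  suffices h : ∃ M : G.Subgraph, M.IsMatching ∧ M.verts = ({x, y}ᶜ : Set V) ∧ ¬ M.Adj u v by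
    obtain ⟨M, h1, h2, h3⟩ := h
    obtain ⟨M', hM', hMv'⟩ := aux_transfer M h1 h3
    exact ⟨M', hM', hMv'.trans h2⟩
  by_cases hxS : x ∈ (({u, v}ᶜ : Set V))
  · by_cases hyS : y ∈ (({u, v}ᶜ : Set V))
    · by_cases hxA : x ∈ A
      · by_cases hyA : y ∈ A
        · exact case_same huvne hbc hunion hdisjAB hnoedgeAB ⟨q, hqB⟩ hAe hxA hyA hxy
        · exact case_mixed hbc hunion hdisjAB hnoedgeAB hAe hxA ⟨hyS, hyA⟩
      · by_cases hyA : y ∈ A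
        · exact case_mixed hbc hunionBA hdisjBA hnoedgeBA hBe ⟨hxS, hxA⟩ hyA
        · exact case_same huvne hbc hunionBA hdisjBA hnoedgeBA ⟨p, hpA⟩ hBe
            ⟨hxS, hxA⟩ ⟨hyS, hyA⟩ hxy
    · have h1 : y = u ∨ y = v := by
        rw [Set.mem_compl_iff, not_not] at hyS
        simpa using hyS
      exact case_trivial hbc hxy (Or.inr (Or.inr h1))
  · have h1 : x = u ∨ x = v := by
      rw [Set.mem_compl_iff, not_not] at hxS
      simpa using hxS
    rcases h1 with h1 | h1
    · exact case_trivial hbc hxy (Or.inl h1)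
    · exact case_trivial hbc hxy (Or.inr (Or.inl h1))
end

section
/- Let G be a bicritical graph whose vertex set is covered by two sets S1 and S2 with S1 ∩ S2 = {u, v}, where {u, v} is a 2-vertex cut of G with uv not an edge of G, such that every edge of G joins two vertices of S1 or two vertices of S2, and the induced subgraphs G1' = G[S1] and G2' = G[S2] are connected and have more than two vertices. For i = 1, 2, let G_i be G_i' together with the edge uv added. Then for i = 1, 2, DE(G_i) \ {uv} = DE(G) ∩ E(G_i), where DE(H) denotes the set of deletable edges of a bicritical graph H. -/
section BicritProofs

open SimpleGraph Set

namespace BicritAux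

variable {V : Type*} {W : Type*}

/-- Build a matching subgraph from a symmetric, functional subrelation. -/
lemma exists_matching_of_rel (G : SimpleGraph V) (r : V → V → Prop)
    (hsymm : ∀ a b, r a b → r b a) (hle : ∀ a b, r a b → G.Adj a b)
    (huniq : ∀ a b c, r a b → r a c → b = c) :
    ∃ M : G.Subgraph, M.IsMatching ∧ M.verts = {a | ∃ b, r a b} ∧
      ∀ a b, M.Adj a b ↔ r a b := by
  refine ⟨⟨{a | ∃ b, r a b}, r, fun h => hle _ _ h, fun {a b} h => ⟨b, h⟩,
    ⟨fun a b h => hsymm a b h⟩⟩, ?_, rfl, fun a b => Iff.rfl⟩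
  rintro a ⟨b, hb⟩
  exact ⟨b, hb, fun c hc => huniq a c b hc hb⟩

lemma exists_matching_union (G : SimpleGraph V) (M₁ M₂ : G.Subgraph)
    (h₁ : M₁.IsMatching) (h₂ : M₂.IsMatching) (hdis : M₁.verts ∩ M₂.verts = ∅) :
    ∃ M : G.Subgraph, M.IsMatching ∧ M.verts = M₁.verts ∪ M₂.verts ∧
      ∀ a b, M.Adj a b ↔ (M₁.Adj a b ∨ M₂.Adj a b) := by
  have hnot : ∀ a, a ∈ M₁.verts → a ∈ M₂.verts → False := by
    intro a h1 h2
    exact Set.notMem_empty a (hdis ▸ Set.mem_inter h1 h2)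
  obtain ⟨M, hM, hv, hadj⟩ := exists_matching_of_rel G (fun a b => M₁.Adj a b ∨ M₂.Adj a b)
    (fun a b h => h.imp (fun h => h.symm) (fun h => h.symm))
    (fun a b h => h.elim (fun h => M₁.adj_sub h) (fun h => M₂.adj_sub h))
    (fun a b c hab hac => by
      rcases hab with hab | hab <;> rcases hac with hac | hac
      · exact ((h₁ (M₁.edge_vert hab)).unique hab hac).symm ▸ rfl
      · exact absurd (M₂.edge_vert hac) (fun h => hnot a (M₁.edge_vert hab) h)
      · exact absurd (M₁.edge_vert hac) (fun h => hnot a h (M₂.edge_vert hab))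
      · exact ((h₂ (M₂.edge_vert hab)).unique hab hac).symm ▸ rfl)
  refine ⟨M, hM, ?_, hadj⟩
  rw [hv]
  ext a
  constructor
  · rintro ⟨b, hb | hb⟩
    · exact Or.inl (M₁.edge_vert hb)
    · exact Or.inr (M₂.edge_vert hb)
  · rintro (ha | ha)
    · obtain ⟨w, hw, -⟩ := h₁ ha
      exact ⟨w, Or.inl hw⟩
    · obtain ⟨w, hw, -⟩ := h₂ ha
      exact ⟨w, Or.inr hw⟩

lemma exists_matching_transfer (A B : SimpleGraph W) (M : A.Subgraph) (hM : M.IsMatching)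
    (h : ∀ a b, M.Adj a b → B.Adj a b) :
    ∃ M' : B.Subgraph, M'.IsMatching ∧ M'.verts = M.verts ∧
      ∀ a b, M'.Adj a b ↔ M.Adj a b := by
  obtain ⟨M', hM', hv, hadj⟩ := exists_matching_of_rel B M.Adj (fun a b h => h.symm) h
    (fun a b c hab hac => ((hM (M.edge_vert hab)).unique hab hac).symm ▸ rfl)
  refine ⟨M', hM', ?_, hadj⟩
  rw [hv]
  ext a
  constructor
  · rintro ⟨b, hb⟩
    exact M.edge_vert hb
  · intro ha
    obtain ⟨w, hw, -⟩ := hM ha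
    exact ⟨w, hw⟩

lemma matching_even_ncard [Finite V] (G : SimpleGraph V) (M : G.Subgraph)
    (hM : M.IsMatching) : Even M.verts.ncard := by
  haveI : Fintype M.verts := Fintype.ofFinite _
  have h := hM.even_card
  rwa [Set.ncard_eq_toFinset_card']

lemma image_val_compl {S : Set V} (A : Set S) :
    Subtype.val '' (Aᶜ) = S \ (Subtype.val '' A) := by
  ext a
  constructor
  · rintro ⟨z, hz, rfl⟩
    refine ⟨z.2, fun ⟨w, hw, hwz⟩ => hz ?_⟩
    rwa [show w = z from Subtype.ext hwz] at hw
  · rintro ⟨ha, h2⟩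
    exact ⟨⟨a, ha⟩, fun hA => h2 ⟨_, hA, rfl⟩, rfl⟩



lemma not_one_sided [Fintype V] {G : SimpleGraph V} {M : G.Subgraph} (hM : M.IsMatching)
    {T : Set V} (hTeven : Even T.ncard) {u v a : V} (hu : u ∉ T) (hv : v ∉ T)
    (hT : ∀ z ∈ T, ∃ w, M.Adj z w ∧ (w ∈ T ∨ w = u ∨ w = v))
    (hua : M.Adj u a) (ha : a ∈ T) (hvb : ∀ b, M.Adj v b → b ∉ T) : False := by
  obtain ⟨N, hN, hNv, -⟩ := exists_matching_of_rel G
    (fun s t => M.Adj s t ∧ s ∈ T \ {a} ∧ t ∈ T \ {a})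
    (fun s t h => ⟨h.1.symm, h.2.2, h.2.1⟩)
    (fun s t h => M.adj_sub h.1)
    (fun s t t' h h' => (hM (M.edge_vert h.1)).unique h.1 h'.1)
  have hset : {z | ∃ t, M.Adj z t ∧ z ∈ T \ {a} ∧ t ∈ T \ {a}} = T \ {a} := by
    ext z
    constructor
    · rintro ⟨t, -, hz, -⟩
      exact hz
    · rintro ⟨hzT, hza⟩
      have hza' : z ≠ a := fun h => hza (by simp [h])
      obtain ⟨w, hw, hcase⟩ := hT z hzT
      have hwT : w ∈ T := by
        rcases hcase with h | rfl | rfl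
        · exact h
        · exact absurd ((hM (M.edge_vert hua)).unique hw.symm hua) hza'
        · exact absurd hzT (hvb z hw.symm)
      have hwa : w ≠ a := by
        rintro rfl
        have hz : z = u := (hM (M.edge_vert hw.symm)).unique hw.symm hua.symm
        exact hu (hz ▸ hzT)
      exact ⟨w, hw, ⟨hzT, by simpa using hza'⟩, hwT, by simpa using hwa⟩
  have heven := matching_even_ncard G N hN
  rw [hNv, hset] at heven
  have h1 : (T \ {a}).ncard = T.ncard - 1 :=
    Set.ncard_diff_singleton_of_mem ha
  have h2 : 0 < T.ncard := (Set.ncard_pos (Set.toFinite _)).mpr ⟨a, ha⟩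
  rw [Nat.even_iff] at hTeven heven
  omega

lemma exists_pm_avoiding [Finite W] {H : SimpleGraph W}
    (hbc : Bicritical H) (p q : W) (hpq : p ≠ q) :
    ∃ M : H.Subgraph, M.IsMatching ∧ M.verts = Set.univ ∧ ¬ M.Adj p q := by
  obtain ⟨hcard, hmatch⟩ := hbc
  have hex : ∃ a, a ≠ p ∧ a ≠ q := by
    by_contra h
    push_neg at h
    have hsub : (Set.univ : Set W) ⊆ {p, q} := by
      intro a _
      by_cases hap : a = p
      · exact Or.inl hap
      · exact Or.inr (h a hap)
    have h1 := Set.ncard_le_ncard hsub (Set.toFinite _)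
    have h2 : ({p, q} : Set W).ncard ≤ 2 :=
      (Set.ncard_insert_le _ _).trans (by simp)
    rw [Set.ncard_univ] at h1
    omega
  obtain ⟨a, hap, haq⟩ := hex
  obtain ⟨M0, hM0, hM0v⟩ := hmatch q a (fun h => haq h.symm)
  have hp : p ∈ M0.verts := by
    rw [hM0v]
    simp only [Set.mem_compl_iff, Set.mem_insert_iff, Set.mem_singleton_iff]
    rintro (rfl | rfl)
    · exact hpq rfl
    · exact hap rfl
  obtain ⟨w, hw, -⟩ := hM0 hp
  have hwq : w ≠ q := by
    have := M0.edge_vert hw.symm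
    rw [hM0v] at this
    simp only [Set.mem_compl_iff, Set.mem_insert_iff, Set.mem_singleton_iff] at this
    push_neg at this
    exact this.1
  have hHpw : H.Adj p w := M0.adj_sub hw
  obtain ⟨M1, hM1, hM1v⟩ := hmatch p w hHpw.ne
  obtain ⟨E, hE, hEv, hEadj⟩ := exists_matching_of_rel H
    (fun s t => (s = p ∧ t = w) ∨ (s = w ∧ t = p))
    (fun s t h => h.elim (fun h => Or.inr ⟨h.2, h.1⟩) (fun h => Or.inl ⟨h.2, h.1⟩))
    (by rintro s t (⟨rfl, rfl⟩ | ⟨rfl, rfl⟩) <;> [exact hHpw; exact hHpw.symm])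
    (by rintro s t t' (⟨rfl, rfl⟩ | ⟨rfl, rfl⟩) (⟨h, rfl⟩ | ⟨h, rfl⟩) <;> first
        | rfl
        | (exact absurd h hHpw.ne) | (exact absurd h hHpw.ne'))
  have hEset : {s | ∃ t, (s = p ∧ t = w) ∨ (s = w ∧ t = p)} = {p, w} := by
    ext z
    constructor
    · rintro ⟨t, ⟨rfl, rfl⟩ | ⟨rfl, rfl⟩⟩
      · exact Or.inl rfl
      · exact Or.inr rfl
    · rintro (rfl | rfl)
      · exact ⟨w, Or.inl ⟨rfl, rfl⟩⟩
      · exact ⟨p, Or.inr ⟨rfl, rfl⟩⟩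
  rw [hEset] at hEv
  obtain ⟨M, hM, hMv, hMadj⟩ := exists_matching_union H M1 E hM1 hE (by
    rw [hM1v, hEv]
    exact Set.compl_inter_self _)
  refine ⟨M, hM, ?_, ?_⟩
  · rw [hMv, hM1v, hEv, Set.compl_union_self]
  · intro hadj
    rcases (hMadj p q).mp hadj with h | h
    · have := M1.edge_vert h
      rw [hM1v] at this
      exact this (Or.inl rfl)
    · rcases (hEadj p q).mp h with ⟨-, rfl⟩ | ⟨h1, -⟩
      · exact hwq rfl
      · exact hHpw.ne h1


structure Setup (V : Type*) where
  G : SimpleGraph V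
  S : Set V
  S' : Set V
  u : V
  v : V
  huv : u ≠ v
  hbc : Bicritical G
  hnadj : ¬ G.Adj u v
  hcover : S ∪ S' = Set.univ
  hinter : S ∩ S' = {u, v}
  hu : u ∈ S
  hv : v ∈ S
  hu' : u ∈ S'
  hv' : v ∈ S'
  hcard : 2 < Nat.card S
  hcard' : 2 < Nat.card S'
  hedges : ∀ a b, G.Adj a b → (a ∈ S ∧ b ∈ S) ∨ (a ∈ S' ∧ b ∈ S')

namespace Setup

def symm {V : Type*} (K : Setup V) : Setup V :=
  { K with
    S := K.S'
    S' := K.S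
    hcover := by rw [Set.union_comm]; exact K.hcover
    hinter := by rw [Set.inter_comm]; exact K.hinter
    hu := K.hu'
    hv := K.hv'
    hu' := K.hu
    hv' := K.hv
    hcard := K.hcard'
    hcard' := K.hcard
    hedges := fun a b h => (K.hedges a b h).symm }

variable {K : Setup V}

lemma mem_uv (K : Setup V) {z : V} (h : z ∈ K.S) (h' : z ∈ K.S') : z = K.u ∨ z = K.v := by
  have := K.hinter ▸ Set.mem_inter h h'
  simpa using this

lemma mem_S_or_S' (K : Setup V) (z : V) : z ∈ K.S ∨ z ∈ K.S' := by
  have : z ∈ K.S ∪ K.S' := K.hcover ▸ Set.mem_univ z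
  simpa using this

/-- `G₁ = G[S] + uv`. -/
def GS (K : Setup V) : SimpleGraph K.S :=
  K.G.induce K.S ⊔ SimpleGraph.edge (⟨K.u, K.hu⟩ : K.S) (⟨K.v, K.hv⟩ : K.S)

lemma GS_adj (K : Setup V) (a b : K.S) :
    K.GS.Adj a b ↔ (K.G.Adj ↑a ↑b ∨
      (((a : V) = K.u ∧ (b : V) = K.v) ∨ ((a : V) = K.v ∧ (b : V) = K.u))) := by
  constructor
  · intro h
    rcases h with h | h
    · exact Or.inl h
    · rw [edge_adj] at h
      refine Or.inr (h.1.imp ?_ ?_) <;>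
        · rintro ⟨rfl, rfl⟩
          exact ⟨rfl, rfl⟩
  · intro h
    rcases h with h | ⟨h1, h2⟩ | ⟨h1, h2⟩
    · exact Or.inl h
    · refine Or.inr ?_
      rw [edge_adj]
      refine ⟨Or.inl ⟨Subtype.ext h1, Subtype.ext h2⟩, fun hab => K.huv ?_⟩
      rw [← h1, ← h2, hab]
    · refine Or.inr ?_
      rw [edge_adj]
      refine ⟨Or.inr ⟨Subtype.ext h1, Subtype.ext h2⟩, fun hab => K.huv ?_⟩
      rw [← h2, ← h1, hab]

/-- the "far side" of the cut -/
lemma evenT [Fintype V] (K : Setup V) : Even ((K.S' \ K.S).ncard) := by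
  obtain ⟨-, h⟩ := K.hbc
  obtain ⟨M, hM, hver⟩ := h K.u K.v K.huv
  have hmem : ∀ z ∈ K.S' \ K.S, z ∈ M.verts := by
    rintro z ⟨hz1, hz2⟩
    rw [hver]
    simp only [Set.mem_compl_iff, Set.mem_insert_iff, Set.mem_singleton_iff]
    rintro (rfl | rfl) <;> [exact hz2 K.hu; exact hz2 K.hv]
  obtain ⟨N, hN, hv, -⟩ := exists_matching_of_rel K.G
    (fun a b => M.Adj a b ∧ a ∈ K.S' \ K.S ∧ b ∈ K.S' \ K.S)
    (fun a b h => ⟨h.1.symm, h.2.2, h.2.1⟩)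
    (fun a b h => M.adj_sub h.1)
    (fun a b c hab hac => (hM (M.edge_vert hab.1)).unique hab.1 hac.1)
  have hset : {a | ∃ b, M.Adj a b ∧ a ∈ K.S' \ K.S ∧ b ∈ K.S' \ K.S} = K.S' \ K.S := by
    ext z
    constructor
    · rintro ⟨b, -, hz, -⟩
      exact hz
    · intro hz
      obtain ⟨w, hw, -⟩ := hM (hmem z hz)
      refine ⟨w, hw, hz, ?_⟩
      have hG := M.adj_sub hw
      have hwS' : w ∈ K.S' := by
        rcases K.hedges _ _ hG with ⟨h1, -⟩ | ⟨-, h2⟩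
        · exact absurd h1 hz.2
        · exact h2
      have hwv : w ∈ M.verts := M.edge_vert hw.symm
      rw [hver] at hwv
      simp only [Set.mem_compl_iff, Set.mem_insert_iff, Set.mem_singleton_iff] at hwv
      push_neg at hwv
      refine ⟨hwS', fun hwS => ?_⟩
      rcases K.mem_uv hwS hwS' with rfl | rfl
      · exact hwv.1 rfl
      · exact hwv.2 rfl
  have := matching_even_ncard K.G N hN
  rwa [hv, hset] at this

lemma ncard_S_eq [Fintype V] (K : Setup V) : K.S.ncard = (K.S \ K.S').ncard + 2 := by
  have hsplit : K.S = (K.S \ K.S') ∪ {K.u, K.v} := by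
    ext z
    constructor
    · intro hz
      by_cases hz' : z ∈ K.S'
      · exact Or.inr (by simpa using K.mem_uv hz hz')
      · exact Or.inl ⟨hz, hz'⟩
    · rintro (⟨hz, -⟩ | hz)
      · exact hz
      · rcases (by simpa using hz : z = K.u ∨ z = K.v) with rfl | rfl
        · exact K.hu
        · exact K.hv
  have hdis : Disjoint (K.S \ K.S') ({K.u, K.v} : Set V) := by
    rw [Set.disjoint_iff]
    rintro z ⟨⟨-, hz2⟩, hz3⟩
    rcases (by simpa using hz3 : z = K.u ∨ z = K.v) with rfl | rfl
    · exact hz2 K.hu'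
    · exact hz2 K.hv'
  nth_rewrite 1 [hsplit]
  rw [Set.ncard_union_eq hdis (Set.toFinite _) (Set.toFinite _), Set.ncard_pair K.huv]

lemma evenS [Fintype V] (K : Setup V) : Even K.S.ncard := by
  have h := K.symm.evenT
  have h2 := K.ncard_S_eq
  have : K.symm.S' \ K.symm.S = K.S \ K.S' := rfl
  rw [this] at h
  obtain ⟨k, hk⟩ := h
  exact ⟨k + 1, by omega⟩

lemma card4 [Fintype V] (K : Setup V) : 4 ≤ Nat.card K.S := by
  have h1 := K.hcard
  have h2 := K.evenS
  rw [Nat.card_coe_set_eq] at h1 ⊢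
  obtain ⟨k, hk⟩ := h2
  omega


lemma project [Fintype V] (K : Setup V)
    (M : K.G.Subgraph) (hM : M.IsMatching) (x y : V) (hx : x ∈ K.S) (hy : y ∈ K.S)
    (hver : M.verts = ({x, y}ᶜ : Set V)) :
    ∃ N : K.GS.Subgraph, N.IsMatching ∧
      N.verts = ({⟨x, hx⟩, ⟨y, hy⟩}ᶜ : Set K.S) ∧
      ∀ a b : K.S, N.Adj a b → M.Adj ↑a ↑b ∨
        (((a : V) = K.u ∧ (b : V) = K.v) ∨ ((a : V) = K.v ∧ (b : V) = K.u)) := by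
  have hTx : ∀ z ∈ K.S' \ K.S, z ∈ M.verts := by
    rintro z ⟨hz1, hz2⟩
    rw [hver]
    simp only [Set.mem_compl_iff, Set.mem_insert_iff, Set.mem_singleton_iff]
    rintro (rfl | rfl)
    · exact hz2 hx
    · exact hz2 hy
  have hpart : ∀ z ∈ K.S' \ K.S, ∃ w, M.Adj z w ∧
      (w ∈ K.S' \ K.S ∨ w = K.u ∨ w = K.v) := by
    intro z hz
    obtain ⟨w, hw, -⟩ := hM (hTx z hz)
    refine ⟨w, hw, ?_⟩
    rcases K.hedges _ _ (M.adj_sub hw) with ⟨h1, -⟩ | ⟨-, h2⟩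
    · exact absurd h1 hz.2
    · by_cases hwS : w ∈ K.S
      · rcases K.mem_uv hwS h2 with h | h
        · exact Or.inr (Or.inl h)
        · exact Or.inr (Or.inr h)
      · exact Or.inl ⟨h2, hwS⟩
  by_cases fu : ∃ c, M.Adj K.u c ∧ c ∈ K.S' \ K.S <;>
    by_cases fv : ∃ c, M.Adj K.v c ∧ c ∈ K.S' \ K.S
  · -- both u and v matched into the far side
    obtain ⟨pa, hpa, hpaT⟩ := fu
    obtain ⟨pb, hpb, hpbT⟩ := fv
    have hux : K.u ∉ ({x, y} : Set V) := by
      have h := M.edge_vert hpa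
      rw [hver] at h
      exact h
    have hvx : K.v ∉ ({x, y} : Set V) := by
      have h := M.edge_vert hpb
      rw [hver] at h
      exact h
    have hnoMu : ∀ b : V, ¬ M.Adj K.u b ∨ b = pa := by
      intro b
      by_cases h : M.Adj K.u b
      · exact Or.inr ((hM (M.edge_vert hpa)).unique h hpa)
      · exact Or.inl h
    have hnoMuS : ∀ b : K.S, ¬ M.Adj K.u ↑b := by
      intro b hb
      rcases hnoMu ↑b with h | h
      · exact h hb
      · exact hpaT.2 (h ▸ b.2)
    have hnoMv : ∀ b : V, ¬ M.Adj K.v b ∨ b = pb := by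
      intro b
      by_cases h : M.Adj K.v b
      · exact Or.inr ((hM (M.edge_vert hpb)).unique h hpb)
      · exact Or.inl h
    have hnoMvS : ∀ b : K.S, ¬ M.Adj K.v ↑b := by
      intro b hb
      rcases hnoMv ↑b with h | h
      · exact h hb
      · exact hpbT.2 (h ▸ b.2)
    have key3 : ∀ (z w : V), z ∈ K.S → z ≠ K.u → z ≠ K.v → M.Adj z w → w ∈ K.S := by
      intro z w hz hzu hzv hzw
      rcases K.hedges _ _ (M.adj_sub hzw) with ⟨-, h⟩ | ⟨h1, -⟩
      · exact h
      · rcases K.mem_uv hz h1 with h | h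
        · exact absurd h hzu
        · exact absurd h hzv
    obtain ⟨N, hN, hNv, hNadj⟩ := exists_matching_of_rel K.GS
      (fun a b => M.Adj ↑a ↑b ∨
        (((a : V) = K.u ∧ (b : V) = K.v) ∨ ((a : V) = K.v ∧ (b : V) = K.u)))
      (fun a b h => by
        rcases h with h | ⟨h1, h2⟩ | ⟨h1, h2⟩
        · exact Or.inl h.symm
        · exact Or.inr (Or.inr ⟨h2, h1⟩)
        · exact Or.inr (Or.inl ⟨h2, h1⟩))
      (fun a b h => by
        rcases h with h | h
        · exact (K.GS_adj a b).mpr (Or.inl (M.adj_sub h))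
        · exact (K.GS_adj a b).mpr (Or.inr h))
      (fun a b c hab hac => by
        by_cases hau : (a : V) = K.u
        · have hval : ∀ d : K.S, (M.Adj ↑a ↑d ∨
              (((a : V) = K.u ∧ (d : V) = K.v) ∨ ((a : V) = K.v ∧ (d : V) = K.u))) →
              (d : V) = K.v := by
            rintro d (h | ⟨-, h⟩ | ⟨h1, -⟩)
            · exact absurd (hau ▸ h) (hnoMuS d)
            · exact h
            · exact absurd (hau.symm.trans h1) K.huv
          exact Subtype.ext ((hval b hab).trans (hval c hac).symm)
        · by_cases hav : (a : V) = K.v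
          · have hval : ∀ d : K.S, (M.Adj ↑a ↑d ∨
                (((a : V) = K.u ∧ (d : V) = K.v) ∨ ((a : V) = K.v ∧ (d : V) = K.u))) →
                (d : V) = K.u := by
              rintro d (h | ⟨h1, -⟩ | ⟨-, h⟩)
              · exact absurd (hav ▸ h) (hnoMvS d)
              · exact absurd h1 hau
              · exact h
            exact Subtype.ext ((hval b hab).trans (hval c hac).symm)
          · have hval : ∀ d : K.S, (M.Adj ↑a ↑d ∨
                (((a : V) = K.u ∧ (d : V) = K.v) ∨ ((a : V) = K.v ∧ (d : V) = K.u))) →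
                M.Adj ↑a ↑d := by
              rintro d (h | ⟨h1, -⟩ | ⟨h1, -⟩)
              · exact h
              · exact absurd h1 hau
              · exact absurd h1 hav
            exact Subtype.ext ((hM (M.edge_vert (hval b hab))).unique (hval b hab)
              (hval c hac))
      )
    refine ⟨N, hN, ?_, fun a b h => (hNadj a b).mp h⟩
    rw [hNv]
    ext z
    simp only [Set.mem_setOf_eq, Set.mem_compl_iff, Set.mem_insert_iff,
      Set.mem_singleton_iff]
    constructor
    · rintro ⟨b, hb⟩ hmem
      have hzval : (z : V) = x ∨ (z : V) = y := by
        rcases hmem with rfl | rfl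
        · exact Or.inl rfl
        · exact Or.inr rfl
      have hzxy : (z : V) ∈ ({x, y} : Set V) := by
        rcases hzval with h | h
        · exact Or.inl h
        · exact Or.inr h
      rcases hb with h | ⟨h, -⟩ | ⟨h, -⟩
      · have hm := M.edge_vert h
        rw [hver] at hm
        exact hm hzxy
      · exact hux (h ▸ hzxy)
      · exact hvx (h ▸ hzxy)
    · intro hmem
      push_neg at hmem
      by_cases hzu : (z : V) = K.u
      · exact ⟨⟨K.v, K.hv⟩, Or.inr (Or.inl ⟨hzu, rfl⟩)⟩
      · by_cases hzv : (z : V) = K.v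
        · exact ⟨⟨K.u, K.hu⟩, Or.inr (Or.inr ⟨hzv, rfl⟩)⟩
        · have hzM : (z : V) ∈ M.verts := by
            rw [hver]
            simp only [Set.mem_compl_iff, Set.mem_insert_iff, Set.mem_singleton_iff]
            rintro (h | h)
            · exact hmem.1 (Subtype.ext h)
            · exact hmem.2 (Subtype.ext h)
          obtain ⟨w, hw, -⟩ := hM hzM
          exact ⟨⟨w, key3 ↑z w z.2 hzu hzv hw⟩, Or.inl hw⟩
  · -- u into far side but not v : contradiction
    obtain ⟨c, hc, hcT⟩ := fu
    exact absurd (⟨c, hc, hcT⟩ : ∃ c, M.Adj K.u c ∧ c ∈ K.S' \ K.S)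
      (fun _ => not_one_sided hM K.evenT (fun h => h.2 K.hu) (fun h => h.2 K.hv)
        hpart hc hcT (fun b hb hbT => fv ⟨b, hb, hbT⟩))
  · -- v into far side but not u : contradiction
    obtain ⟨c, hc, hcT⟩ := fv
    exact absurd (⟨c, hc, hcT⟩ : ∃ c, M.Adj K.v c ∧ c ∈ K.S' \ K.S)
      (fun _ => not_one_sided hM K.evenT (fun h => h.2 K.hv) (fun h => h.2 K.hu)
        (fun z hz => (hpart z hz).imp (fun w hw => ⟨hw.1, hw.2.elim Or.inl
          (fun h => h.elim (fun h => Or.inr (Or.inr h)) (fun h => Or.inr (Or.inl h)))⟩))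
        hc hcT (fun b hb hbT => fu ⟨b, hb, hbT⟩))
  · -- neither matched to far side
    have key2 : ∀ (z w : V), z ∈ K.S → M.Adj z w → w ∈ K.S := by
      intro z w hz hzw
      rcases K.hedges _ _ (M.adj_sub hzw) with ⟨-, h⟩ | ⟨h1, h2⟩
      · exact h
      · by_cases hwS : w ∈ K.S
        · exact hwS
        · exfalso
          rcases K.mem_uv hz h1 with h | h
          · exact fu ⟨w, h ▸ hzw, h2, hwS⟩
          · exact fv ⟨w, h ▸ hzw, h2, hwS⟩
    obtain ⟨N, hN, hNv, hNadj⟩ := exists_matching_of_rel K.GS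
      (fun a b : K.S => M.Adj ↑a ↑b)
      (fun a b h => h.symm)
      (fun a b h => (K.GS_adj a b).mpr (Or.inl (M.adj_sub h)))
      (fun a b c hab hac =>
        Subtype.ext ((hM (M.edge_vert hab)).unique hab hac))
    refine ⟨N, hN, ?_, fun a b h => Or.inl ((hNadj a b).mp h)⟩
    rw [hNv]
    ext z
    simp only [Set.mem_setOf_eq, Set.mem_compl_iff, Set.mem_insert_iff,
      Set.mem_singleton_iff]
    constructor
    · rintro ⟨b, hb⟩ hmem
      have hm := M.edge_vert hb
      rw [hver] at hm
      apply hm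
      rcases hmem with rfl | rfl
      · exact Or.inl rfl
      · exact Or.inr rfl
    · intro hmem
      push_neg at hmem
      have hzM : (z : V) ∈ M.verts := by
        rw [hver]
        simp only [Set.mem_compl_iff, Set.mem_insert_iff, Set.mem_singleton_iff]
        rintro (h | h)
        · exact hmem.1 (Subtype.ext h)
        · exact hmem.2 (Subtype.ext h)
      obtain ⟨w, hw, -⟩ := hM hzM
      exact ⟨⟨w, key2 ↑z w z.2 hw⟩, hw⟩


lemma bicritGS [Fintype V] (K : Setup V) : Bicritical K.GS := by
  refine ⟨K.card4, ?_⟩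
  rintro ⟨x, hx⟩ ⟨y, hy⟩ hne
  have hxy : x ≠ y := fun h => hne (Subtype.ext h)
  obtain ⟨M, hM, hver⟩ := K.hbc.2 x y hxy
  obtain ⟨N, hN, hNv, -⟩ := K.project M hM x y hx hy hver
  exact ⟨N, hN, hNv⟩

lemma lift (K : Setup V) (N : K.GS.Subgraph) (hN : N.IsMatching)
    (hnuv : ¬ N.Adj ⟨K.u, K.hu⟩ ⟨K.v, K.hv⟩) :
    ∃ M : K.G.Subgraph, M.IsMatching ∧ M.verts = Subtype.val '' N.verts ∧
      ∀ a b : V, M.Adj a b → ∃ (ha : a ∈ K.S) (hb : b ∈ K.S), N.Adj ⟨a, ha⟩ ⟨b, hb⟩ := by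
  obtain ⟨M, hM, hMv, hMadj⟩ := exists_matching_of_rel K.G
    (fun a b => ∃ (ha : a ∈ K.S) (hb : b ∈ K.S), N.Adj ⟨a, ha⟩ ⟨b, hb⟩)
    (fun a b h => by
      obtain ⟨ha, hb, h⟩ := h
      exact ⟨hb, ha, h.symm⟩)
    (fun a b h => by
      obtain ⟨ha, hb, h⟩ := h
      rcases (K.GS_adj _ _).mp (N.adj_sub h) with hg | ⟨h1, h2⟩ | ⟨h1, h2⟩
      · exact hg
      · exfalso
        apply hnuv
        have e1 : (⟨a, ha⟩ : K.S) = ⟨K.u, K.hu⟩ := Subtype.ext h1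
        have e2 : (⟨b, hb⟩ : K.S) = ⟨K.v, K.hv⟩ := Subtype.ext h2
        rw [← e1, ← e2]
        exact h
      · exfalso
        apply hnuv
        have e1 : (⟨a, ha⟩ : K.S) = ⟨K.v, K.hv⟩ := Subtype.ext h1
        have e2 : (⟨b, hb⟩ : K.S) = ⟨K.u, K.hu⟩ := Subtype.ext h2
        rw [← e2, ← e1]
        exact h.symm)
    (fun a b c hab hac => by
      obtain ⟨ha, hb, hab⟩ := hab
      obtain ⟨ha', hc, hac⟩ := hac
      have := (hN (N.edge_vert hab)).unique hab hac
      exact congrArg Subtype.val this)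
  refine ⟨M, hM, ?_, fun a b h => (hMadj a b).mp h⟩
  rw [hMv]
  ext a
  constructor
  · rintro ⟨b, ha, hb, h⟩
    exact ⟨⟨a, ha⟩, N.edge_vert h, rfl⟩
  · rintro ⟨z, hz, rfl⟩
    obtain ⟨w, hw, -⟩ := hN hz
    exact ⟨↑w, z.2, w.2, hw⟩

lemma piece_two [Fintype V] (K : Setup V) (F : Sym2 V)
    (hF : ∀ a b : V, a ∈ K.S → b ∈ K.S → s(a, b) ≠ F)
    (x y : V) (hx : x ∈ K.S) (hy : y ∈ K.S) (hxy : x ≠ y)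
    (hone : K.u = x ∨ K.u = y ∨ K.v = x ∨ K.v = y) :
    ∃ M : (K.G.deleteEdges {F}).Subgraph, M.IsMatching ∧ M.verts = K.S \ {x, y} := by
  obtain ⟨N, hN, hNv⟩ := K.bicritGS.2 ⟨x, hx⟩ ⟨y, hy⟩ (fun h => hxy (congrArg Subtype.val h))
  have hnuv : ¬ N.Adj ⟨K.u, K.hu⟩ ⟨K.v, K.hv⟩ := by
    intro h
    have h1 := N.edge_vert h
    have h2 := N.edge_vert h.symm
    rw [hNv] at h1 h2
    rcases hone with h' | h' | h' | h'
    · exact h1 (Or.inl (Subtype.ext h'))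
    · exact h1 (Or.inr (Subtype.ext h'))
    · exact h2 (Or.inl (Subtype.ext h'))
    · exact h2 (Or.inr (Subtype.ext h'))
  obtain ⟨M₀, hM₀, hM₀v, hM₀adj⟩ := K.lift N hN hnuv
  obtain ⟨M, hM, hMv, -⟩ := exists_matching_transfer K.G (K.G.deleteEdges {F}) M₀ hM₀
    (fun a b h => by
      obtain ⟨ha, hb, -⟩ := hM₀adj a b h
      rw [SimpleGraph.deleteEdges_adj]
      exact ⟨M₀.adj_sub h, by simpa using hF a b ha hb⟩)
  refine ⟨M, hM, ?_⟩
  rw [hMv, hM₀v, hNv, image_val_compl]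
  congr 1
  simp [Set.image_insert_eq]

lemma piece_full [Fintype V] (K : Setup V) (F : Sym2 V)
    (hF : ∀ a b : V, a ∈ K.S → b ∈ K.S → s(a, b) ≠ F) :
    ∃ M : (K.G.deleteEdges {F}).Subgraph, M.IsMatching ∧ M.verts = K.S := by
  obtain ⟨N, hN, hNv, hnuv⟩ := exists_pm_avoiding K.bicritGS ⟨K.u, K.hu⟩ ⟨K.v, K.hv⟩
    (fun h => K.huv (congrArg Subtype.val h))
  obtain ⟨M₀, hM₀, hM₀v, hM₀adj⟩ := K.lift N hN hnuv
  obtain ⟨M, hM, hMv, -⟩ := exists_matching_transfer K.G (K.G.deleteEdges {F}) M₀ hM₀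
    (fun a b h => by
      obtain ⟨ha, hb, -⟩ := hM₀adj a b h
      rw [SimpleGraph.deleteEdges_adj]
      exact ⟨M₀.adj_sub h, by simpa using hF a b ha hb⟩)
  refine ⟨M, hM, ?_⟩
  rw [hMv, hM₀v, hNv]
  exact Subtype.coe_image_univ _

lemma piece_strip [Fintype V] (K : Setup V) (F : Sym2 V)
    (hF : ∀ a b : V, a ∈ K.S → b ∈ K.S → s(a, b) ≠ F)
    (x y : V) (hx : x ∈ K.S) (hy : y ∈ K.S) (hxy : x ≠ y) :
    (∃ M : (K.G.deleteEdges {F}).Subgraph, M.IsMatching ∧ M.verts = K.S \ {x, y}) ∨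
    ((K.u ≠ x ∧ K.u ≠ y ∧ K.v ≠ x ∧ K.v ≠ y) ∧
      ∃ M : (K.G.deleteEdges {F}).Subgraph, M.IsMatching ∧
        M.verts = K.S \ {x, y, K.u, K.v}) := by
  obtain ⟨N, hN, hNv⟩ := K.bicritGS.2 ⟨x, hx⟩ ⟨y, hy⟩ (fun h => hxy (congrArg Subtype.val h))
  by_cases hN2 : N.Adj ⟨K.u, K.hu⟩ ⟨K.v, K.hv⟩
  · -- the matching uses the edge uv; strip it
    right
    have hum := N.edge_vert hN2
    have hvm := N.edge_vert hN2.symm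
    rw [hNv] at hum hvm
    have hne4 : K.u ≠ x ∧ K.u ≠ y ∧ K.v ≠ x ∧ K.v ≠ y := by
      refine ⟨fun h => hum (Or.inl (Subtype.ext h)), fun h => hum (Or.inr (Subtype.ext h)),
        fun h => hvm (Or.inl (Subtype.ext h)), fun h => hvm (Or.inr (Subtype.ext h))⟩
    refine ⟨hne4, ?_⟩
    obtain ⟨N₂, hN₂, hN₂v, hN₂adj⟩ := exists_matching_of_rel K.GS
      (fun a b => N.Adj a b ∧ a ≠ ⟨K.u, K.hu⟩ ∧ a ≠ ⟨K.v, K.hv⟩ ∧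
        b ≠ ⟨K.u, K.hu⟩ ∧ b ≠ ⟨K.v, K.hv⟩)
      (fun a b h => ⟨h.1.symm, h.2.2.2.1, h.2.2.2.2, h.2.1, h.2.2.1⟩)
      (fun a b h => N.adj_sub h.1)
      (fun a b c hab hac => (hN (N.edge_vert hab.1)).unique hab.1 hac.1)
    have hset : {a : K.S | ∃ b, N.Adj a b ∧ a ≠ ⟨K.u, K.hu⟩ ∧ a ≠ ⟨K.v, K.hv⟩ ∧
        b ≠ ⟨K.u, K.hu⟩ ∧ b ≠ ⟨K.v, K.hv⟩} =
        ({⟨x, hx⟩, ⟨y, hy⟩, ⟨K.u, K.hu⟩, ⟨K.v, K.hv⟩}ᶜ : Set K.S) := by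
      ext z
      simp only [Set.mem_setOf_eq, Set.mem_compl_iff, Set.mem_insert_iff,
        Set.mem_singleton_iff]
      constructor
      · rintro ⟨b, hzb, hzu, hzv, -, -⟩ (h | h | h | h)
        · have := N.edge_vert hzb
          rw [hNv] at this
          exact this (Or.inl h)
        · have := N.edge_vert hzb
          rw [hNv] at this
          exact this (Or.inr h)
        · exact hzu h
        · exact hzv h
      · intro hmem
        push_neg at hmem
        obtain ⟨hzx, hzy, hzu, hzv⟩ := hmem
        have hzmem : z ∈ N.verts := by
          rw [hNv]
          simp only [Set.mem_compl_iff, Set.mem_insert_iff, Set.mem_singleton_iff]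
          rintro (h | h)
          · exact hzx h
          · exact hzy h
        obtain ⟨w, hw, -⟩ := hN hzmem
        have hwu : w ≠ ⟨K.u, K.hu⟩ := by
          rintro rfl
          exact hzv ((hN (N.edge_vert hN2)).unique hw.symm hN2)
        have hwv : w ≠ ⟨K.v, K.hv⟩ := by
          rintro rfl
          exact hzu ((hN (N.edge_vert hN2.symm)).unique hw.symm hN2.symm)
        exact ⟨w, hw, hzu, hzv, hwu, hwv⟩
    rw [hset] at hN₂v
    have hnuv₂ : ¬ N₂.Adj ⟨K.u, K.hu⟩ ⟨K.v, K.hv⟩ := by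
      intro h
      exact ((hN₂adj _ _).mp h).2.1 rfl
    obtain ⟨M₀, hM₀, hM₀v, hM₀adj⟩ := K.lift N₂ hN₂ hnuv₂
    obtain ⟨M, hM, hMv, -⟩ := exists_matching_transfer K.G (K.G.deleteEdges {F}) M₀ hM₀
      (fun a b h => by
        obtain ⟨ha, hb, -⟩ := hM₀adj a b h
        rw [SimpleGraph.deleteEdges_adj]
        exact ⟨M₀.adj_sub h, by simpa using hF a b ha hb⟩)
    refine ⟨M, hM, ?_⟩
    rw [hMv, hM₀v, hN₂v, image_val_compl]
    congr 1
    simp [Set.image_insert_eq]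
  · left
    obtain ⟨M₀, hM₀, hM₀v, hM₀adj⟩ := K.lift N hN hN2
    obtain ⟨M, hM, hMv, -⟩ := exists_matching_transfer K.G (K.G.deleteEdges {F}) M₀ hM₀
      (fun a b h => by
        obtain ⟨ha, hb, -⟩ := hM₀adj a b h
        rw [SimpleGraph.deleteEdges_adj]
        exact ⟨M₀.adj_sub h, by simpa using hF a b ha hb⟩)
    refine ⟨M, hM, ?_⟩
    rw [hMv, hM₀v, hNv, image_val_compl]
    congr 1
    simp [Set.image_insert_eq]


lemma bicritGS_del [Fintype V] (K : Setup V) (e : Sym2 K.S)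
    (hmap : Sym2.map Subtype.val e ≠ s(K.u, K.v))
    (hbcd : Bicritical (K.G.deleteEdges {Sym2.map Subtype.val e})) :
    Bicritical ((K.GS.deleteEdges {e})) := by
  refine ⟨K.card4, ?_⟩
  rintro ⟨x, hx⟩ ⟨y, hy⟩ hne
  have hxy : x ≠ y := fun h => hne (Subtype.ext h)
  obtain ⟨M, hM, hver⟩ := hbcd.2 x y hxy
  obtain ⟨M', hM', hM'v, hM'adj⟩ := exists_matching_transfer _ K.G M hM
    (fun a b h => ((SimpleGraph.deleteEdges_adj).mp (M.adj_sub h)).1)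
  obtain ⟨N, hN, hNv, hNadj⟩ := K.project M' hM' x y hx hy (hM'v.trans hver)
  obtain ⟨N', hN', hN'v, -⟩ := exists_matching_transfer K.GS (K.GS.deleteEdges {e}) N hN
    (fun a b h => by
      rw [SimpleGraph.deleteEdges_adj]
      refine ⟨N.adj_sub h, ?_⟩
      simp only [Set.mem_singleton_iff]
      intro hmem
      rcases hNadj a b h with hMab | ⟨h1, h2⟩ | ⟨h1, h2⟩
      · have hMab' := (hM'adj _ _).mp hMab
        have hdel := M.adj_sub hMab'
        have hneq := ((SimpleGraph.deleteEdges_adj).mp hdel).2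
        apply hneq
        simp only [Set.mem_singleton_iff, ← hmem, Sym2.map_pair_eq]
      · apply hmap
        rw [← hmem, Sym2.map_pair_eq, h1, h2]
      · apply hmap
        rw [← hmem, Sym2.map_pair_eq, h1, h2, Sym2.eq_swap])
  exact ⟨N', hN', hN'v.trans hNv⟩


/-- Lower a matching of `GS` to a matching of any graph `B` on `V` dominating its edges. -/
lemma lower [Fintype V] (K : Setup V) (B : SimpleGraph V) (N : K.GS.Subgraph)
    (hN : N.IsMatching) (hnuv : ¬ N.Adj ⟨K.u, K.hu⟩ ⟨K.v, K.hv⟩)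
    (hB : ∀ a b : V, ∀ ha : a ∈ K.S, ∀ hb : b ∈ K.S, N.Adj ⟨a, ha⟩ ⟨b, hb⟩ → B.Adj a b) :
    ∃ M : B.Subgraph, M.IsMatching ∧ M.verts = Subtype.val '' N.verts := by
  obtain ⟨M₀, hM₀, hM₀v, hM₀adj⟩ := K.lift N hN hnuv
  obtain ⟨M, hM, hMv, -⟩ := exists_matching_transfer K.G B M₀ hM₀
    (fun a b h => by
      obtain ⟨ha, hb, h'⟩ := hM₀adj a b h
      exact hB a b ha hb h')
  exact ⟨M, hM, hMv.trans hM₀v⟩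

lemma piece_del_aux [Fintype V] (K : Setup V) (e : Sym2 K.S)
    (N : (K.GS.deleteEdges {e}).Subgraph) (hN : N.IsMatching)
    (hnuv : ¬ N.Adj ⟨K.u, K.hu⟩ ⟨K.v, K.hv⟩) :
    ∃ M : (K.G.deleteEdges {Sym2.map Subtype.val e}).Subgraph, M.IsMatching ∧
      M.verts = Subtype.val '' N.verts := by
  obtain ⟨N₁, hN₁, hN₁v, hN₁adj⟩ := exists_matching_transfer _ K.GS N hN
    (fun a b h => ((SimpleGraph.deleteEdges_adj).mp (N.adj_sub h)).1)
  have hnuv₁ : ¬ N₁.Adj ⟨K.u, K.hu⟩ ⟨K.v, K.hv⟩ := fun h => hnuv ((hN₁adj _ _).mp h)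
  obtain ⟨M, hM, hMv⟩ := K.lower (K.G.deleteEdges {Sym2.map Subtype.val e}) N₁ hN₁ hnuv₁
    (fun a b ha hb h => by
      have h' := (hN₁adj _ _).mp h
      have h2 := (SimpleGraph.deleteEdges_adj).mp (N.adj_sub h')
      rw [SimpleGraph.deleteEdges_adj]
      refine ⟨(K.GS_adj _ _).mp h2.1 |>.elim id (fun hc => ?_), ?_⟩
      · exfalso
        apply hnuv₁
        rcases hc with ⟨h1', h2'⟩ | ⟨h1', h2'⟩
        · have e1 : (⟨a, ha⟩ : K.S) = ⟨K.u, K.hu⟩ := Subtype.ext h1'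
          have e2 : (⟨b, hb⟩ : K.S) = ⟨K.v, K.hv⟩ := Subtype.ext h2'
          rw [← e1, ← e2]
          exact h
        · have e1 : (⟨a, ha⟩ : K.S) = ⟨K.v, K.hv⟩ := Subtype.ext h1'
          have e2 : (⟨b, hb⟩ : K.S) = ⟨K.u, K.hu⟩ := Subtype.ext h2'
          rw [← e2, ← e1]
          exact h.symm
      · simp only [Set.mem_singleton_iff]
        intro hc
        apply h2.2
        simp only [Set.mem_singleton_iff]
        apply Sym2.map.injective Subtype.val_injective
        rw [Sym2.map_pair_eq]
        exact hc)
  rw [hN₁v] at hMv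
  exact ⟨M, hM, hMv⟩

lemma piece_del_two [Fintype V] (K : Setup V) (e : Sym2 K.S)
    (hdel : Bicritical (K.GS.deleteEdges {e}))
    (x y : V) (hx : x ∈ K.S) (hy : y ∈ K.S) (hxy : x ≠ y)
    (hone : K.u = x ∨ K.u = y ∨ K.v = x ∨ K.v = y) :
    ∃ M : (K.G.deleteEdges {Sym2.map Subtype.val e}).Subgraph, M.IsMatching ∧
      M.verts = K.S \ {x, y} := by
  obtain ⟨N, hN, hNv⟩ := hdel.2 ⟨x, hx⟩ ⟨y, hy⟩ (fun h => hxy (congrArg Subtype.val h))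
  have hnuv : ¬ N.Adj ⟨K.u, K.hu⟩ ⟨K.v, K.hv⟩ := by
    intro h
    have h1 := N.edge_vert h
    have h2 := N.edge_vert h.symm
    rw [hNv] at h1 h2
    rcases hone with h' | h' | h' | h'
    · exact h1 (Or.inl (Subtype.ext h'))
    · exact h1 (Or.inr (Subtype.ext h'))
    · exact h2 (Or.inl (Subtype.ext h'))
    · exact h2 (Or.inr (Subtype.ext h'))
  obtain ⟨M, hM, hMv⟩ := K.piece_del_aux e N hN hnuv
  refine ⟨M, hM, ?_⟩
  rw [hMv, hNv, image_val_compl]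
  congr 1
  simp [Set.image_insert_eq]

lemma piece_del_full [Fintype V] (K : Setup V) (e : Sym2 K.S)
    (hdel : Bicritical (K.GS.deleteEdges {e})) :
    ∃ M : (K.G.deleteEdges {Sym2.map Subtype.val e}).Subgraph, M.IsMatching ∧
      M.verts = K.S := by
  obtain ⟨N, hN, hNv, hnuv⟩ := exists_pm_avoiding hdel ⟨K.u, K.hu⟩ ⟨K.v, K.hv⟩
    (fun h => K.huv (congrArg Subtype.val h))
  obtain ⟨M, hM, hMv⟩ := K.piece_del_aux e N hN hnuv
  refine ⟨M, hM, ?_⟩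
  rw [hMv, hNv]
  exact Subtype.coe_image_univ _

lemma piece_del_strip [Fintype V] (K : Setup V) (e : Sym2 K.S)
    (hdel : Bicritical (K.GS.deleteEdges {e}))
    (x y : V) (hx : x ∈ K.S) (hy : y ∈ K.S) (hxy : x ≠ y) :
    (∃ M : (K.G.deleteEdges {Sym2.map Subtype.val e}).Subgraph, M.IsMatching ∧
        M.verts = K.S \ {x, y}) ∨
    ((K.u ≠ x ∧ K.u ≠ y ∧ K.v ≠ x ∧ K.v ≠ y) ∧
      ∃ M : (K.G.deleteEdges {Sym2.map Subtype.val e}).Subgraph, M.IsMatching ∧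
        M.verts = K.S \ {x, y, K.u, K.v}) := by
  obtain ⟨N, hN, hNv⟩ := hdel.2 ⟨x, hx⟩ ⟨y, hy⟩ (fun h => hxy (congrArg Subtype.val h))
  by_cases hN2 : N.Adj ⟨K.u, K.hu⟩ ⟨K.v, K.hv⟩
  · right
    have hum := N.edge_vert hN2
    have hvm := N.edge_vert hN2.symm
    rw [hNv] at hum hvm
    have hne4 : K.u ≠ x ∧ K.u ≠ y ∧ K.v ≠ x ∧ K.v ≠ y :=
      ⟨fun h => hum (Or.inl (Subtype.ext h)), fun h => hum (Or.inr (Subtype.ext h)),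
        fun h => hvm (Or.inl (Subtype.ext h)), fun h => hvm (Or.inr (Subtype.ext h))⟩
    refine ⟨hne4, ?_⟩
    obtain ⟨N₂, hN₂, hN₂v, hN₂adj⟩ := exists_matching_of_rel (K.GS.deleteEdges {e})
      (fun a b => N.Adj a b ∧ a ≠ ⟨K.u, K.hu⟩ ∧ a ≠ ⟨K.v, K.hv⟩ ∧
        b ≠ ⟨K.u, K.hu⟩ ∧ b ≠ ⟨K.v, K.hv⟩)
      (fun a b h => ⟨h.1.symm, h.2.2.2.1, h.2.2.2.2, h.2.1, h.2.2.1⟩)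
      (fun a b h => N.adj_sub h.1)
      (fun a b c hab hac => (hN (N.edge_vert hab.1)).unique hab.1 hac.1)
    have hset : {a : K.S | ∃ b, N.Adj a b ∧ a ≠ ⟨K.u, K.hu⟩ ∧ a ≠ ⟨K.v, K.hv⟩ ∧
        b ≠ ⟨K.u, K.hu⟩ ∧ b ≠ ⟨K.v, K.hv⟩} =
        ({⟨x, hx⟩, ⟨y, hy⟩, ⟨K.u, K.hu⟩, ⟨K.v, K.hv⟩}ᶜ : Set K.S) := by
      ext z
      simp only [Set.mem_setOf_eq, Set.mem_compl_iff, Set.mem_insert_iff,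
        Set.mem_singleton_iff]
      constructor
      · rintro ⟨b, hzb, hzu, hzv, -, -⟩ (h | h | h | h)
        · have := N.edge_vert hzb
          rw [hNv] at this
          exact this (Or.inl h)
        · have := N.edge_vert hzb
          rw [hNv] at this
          exact this (Or.inr h)
        · exact hzu h
        · exact hzv h
      · intro hmem
        push_neg at hmem
        obtain ⟨hzx, hzy, hzu, hzv⟩ := hmem
        have hzmem : z ∈ N.verts := by
          rw [hNv]
          simp only [Set.mem_compl_iff, Set.mem_insert_iff, Set.mem_singleton_iff]
          rintro (h | h)
          · exact hzx h
          · exact hzy h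
        obtain ⟨w, hw, -⟩ := hN hzmem
        have hwu : w ≠ ⟨K.u, K.hu⟩ := by
          rintro rfl
          exact hzv ((hN (N.edge_vert hN2)).unique hw.symm hN2)
        have hwv : w ≠ ⟨K.v, K.hv⟩ := by
          rintro rfl
          exact hzu ((hN (N.edge_vert hN2.symm)).unique hw.symm hN2.symm)
        exact ⟨w, hw, hzu, hzv, hwu, hwv⟩
    rw [hset] at hN₂v
    have hnuv₂ : ¬ N₂.Adj ⟨K.u, K.hu⟩ ⟨K.v, K.hv⟩ := by
      intro h
      exact ((hN₂adj _ _).mp h).2.1 rfl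
    obtain ⟨M, hM, hMv⟩ := K.piece_del_aux e N₂ hN₂ hnuv₂
    refine ⟨M, hM, ?_⟩
    rw [hMv, hN₂v, image_val_compl]
    congr 1
    simp [Set.image_insert_eq]
  · left
    obtain ⟨M, hM, hMv⟩ := K.piece_del_aux e N hN hN2
    refine ⟨M, hM, ?_⟩
    rw [hMv, hNv, image_val_compl]
    congr 1
    simp [Set.image_insert_eq]


lemma setI1 (K : Setup V) (x y : V) :
    (K.S \ {x, y}) ∩ (K.S' \ {K.u, K.v}) = ∅ := by
  ext z
  simp only [Set.mem_inter_iff, Set.mem_diff, Set.mem_insert_iff, Set.mem_singleton_iff,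
    Set.mem_empty_iff_false, iff_false]
  rintro ⟨⟨hzS, -⟩, ⟨hzS', hz2⟩⟩
  exact hz2 (K.mem_uv hzS hzS')

lemma setI2 (K : Setup V) (x y : V) :
    (K.S \ {x, y, K.u, K.v}) ∩ K.S' = ∅ := by
  ext z
  simp only [Set.mem_inter_iff, Set.mem_diff, Set.mem_insert_iff, Set.mem_singleton_iff,
    Set.mem_empty_iff_false, iff_false]
  rintro ⟨⟨hzS, hz2⟩, hzS'⟩
  rcases K.mem_uv hzS hzS' with h | h
  · exact hz2 (Or.inr (Or.inr (Or.inl h)))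
  · exact hz2 (Or.inr (Or.inr (Or.inr h)))

lemma setIm (K : Setup V) (x y : V) :
    (K.S \ {x, K.u}) ∩ (K.S' \ {K.v, y}) = ∅ := by
  ext z
  simp only [Set.mem_inter_iff, Set.mem_diff, Set.mem_insert_iff, Set.mem_singleton_iff,
    Set.mem_empty_iff_false, iff_false]
  rintro ⟨⟨hzS, hz2⟩, ⟨hzS', hz3⟩⟩
  rcases K.mem_uv hzS hzS' with h | h
  · exact hz2 (Or.inr h)
  · exact hz3 (Or.inl h)

lemma setU1 (K : Setup V) {x y : V} (hx : x ∈ K.S) (hy : y ∈ K.S) :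
    (K.S \ {x, y}) ∪ (K.S' \ {K.u, K.v}) = ({x, y}ᶜ : Set V) := by
  ext z
  simp only [Set.mem_union, Set.mem_diff, Set.mem_insert_iff, Set.mem_singleton_iff,
    Set.mem_compl_iff]
  constructor
  · rintro (⟨-, hz2⟩ | ⟨hzS', hz2⟩)
    · exact hz2
    · rintro (rfl | rfl)
      · exact hz2 (K.mem_uv hx hzS')
      · exact hz2 (K.mem_uv hy hzS')
  · intro hz
    by_cases hzS : z ∈ K.S
    · exact Or.inl ⟨hzS, hz⟩
    · rcases K.mem_S_or_S' z with h | h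
      · exact absurd h hzS
      · refine Or.inr ⟨h, ?_⟩
        rintro (rfl | rfl)
        · exact hzS K.hu
        · exact hzS K.hv

lemma setU2 (K : Setup V) {x y : V} (hx : x ∈ K.S) (hy : y ∈ K.S)
    (h4 : K.u ≠ x ∧ K.u ≠ y ∧ K.v ≠ x ∧ K.v ≠ y) :
    (K.S \ {x, y, K.u, K.v}) ∪ K.S' = ({x, y}ᶜ : Set V) := by
  ext z
  simp only [Set.mem_union, Set.mem_diff, Set.mem_insert_iff, Set.mem_singleton_iff,
    Set.mem_compl_iff]
  constructor
  · rintro (⟨-, hz2⟩ | hzS')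
    · intro h
      apply hz2
      rcases h with h | h
      · exact Or.inl h
      · exact Or.inr (Or.inl h)
    · rintro (rfl | rfl)
      · rcases K.mem_uv hx hzS' with h | h
        · exact h4.1 h.symm
        · exact h4.2.2.1 h.symm
      · rcases K.mem_uv hy hzS' with h | h
        · exact h4.2.1 h.symm
        · exact h4.2.2.2 h.symm
  · intro hz
    by_cases hzS' : z ∈ K.S'
    · exact Or.inr hzS'
    · rcases K.mem_S_or_S' z with h | h
      · refine Or.inl ⟨h, ?_⟩
        rintro (h' | h' | h' | h')
        · exact hz (Or.inl h')
        · exact hz (Or.inr h')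
        · exact hzS' (h' ▸ K.hu')
        · exact hzS' (h' ▸ K.hv')
      · exact absurd h hzS'

lemma setUm (K : Setup V) {x y : V} (hx : x ∈ K.S) (hxn : x ∉ K.S')
    (hy : y ∈ K.S') (hyn : y ∉ K.S) :
    (K.S \ {x, K.u}) ∪ (K.S' \ {K.v, y}) = ({x, y}ᶜ : Set V) := by
  ext z
  simp only [Set.mem_union, Set.mem_diff, Set.mem_insert_iff, Set.mem_singleton_iff,
    Set.mem_compl_iff]
  constructor
  · rintro (⟨hzS, hz2⟩ | ⟨hzS', hz2⟩)
    · rintro (rfl | rfl)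
      · exact hz2 (Or.inl rfl)
      · exact hyn hzS
    · rintro (rfl | rfl)
      · exact hxn hzS'
      · exact hz2 (Or.inr rfl)
  · intro hz
    push_neg at hz
    by_cases hzS : z ∈ K.S
    · by_cases hzu : z = K.u
      · subst hzu
        refine Or.inr ⟨K.hu', ?_⟩
        rintro (h | h)
        · exact K.huv h
        · exact hyn (h ▸ hzS)
      · exact Or.inl ⟨hzS, by
          rintro (h | h)
          · exact hz.1 h
          · exact hzu h⟩
    · rcases K.mem_S_or_S' z with h | h
      · exact absurd h hzS
      · refine Or.inr ⟨h, ?_⟩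
        rintro (h' | h')
        · exact hzS (h' ▸ K.hv)
        · exact hz.2 h'

lemma bicritG_del [Fintype V] (K : Setup V) (e : Sym2 K.S)
    (he : e ∈ K.GS.edgeSet)
    (hene : e ≠ s((⟨K.u, K.hu⟩ : K.S), (⟨K.v, K.hv⟩ : K.S)))
    (hdel : Bicritical (K.GS.deleteEdges {e})) :
    Bicritical (K.G.deleteEdges {Sym2.map Subtype.val e}) := by
  have hex : ∃ p q : K.S, e = s(p, q) := by
    induction e using Sym2.ind with
    | _ p q => exact ⟨p, q, rfl⟩
  obtain ⟨p, q, rfl⟩ := hex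
  have hpq : K.GS.Adj p q := by rwa [SimpleGraph.mem_edgeSet] at he
  have hGpq : K.G.Adj ↑p ↑q := by
    rcases (K.GS_adj p q).mp hpq with h | ⟨h1, h2⟩ | ⟨h1, h2⟩
    · exact h
    · exfalso
      apply hene
      rw [show p = (⟨K.u, K.hu⟩ : K.S) from Subtype.ext h1,
        show q = (⟨K.v, K.hv⟩ : K.S) from Subtype.ext h2]
    · exfalso
      apply hene
      rw [show p = (⟨K.v, K.hv⟩ : K.S) from Subtype.ext h1,
        show q = (⟨K.u, K.hu⟩ : K.S) from Subtype.ext h2, Sym2.eq_swap]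
  have hFS' : ∀ a b : V, a ∈ K.S' → b ∈ K.S' → s(a, b) ≠ Sym2.map Subtype.val s(p, q) := by
    intro a b ha hb hab
    rw [Sym2.map_pair_eq, Sym2.eq_iff] at hab
    have hp' : (p : V) ∈ K.S' ∧ (q : V) ∈ K.S' := by
      rcases hab with ⟨h1, h2⟩ | ⟨h1, h2⟩
      · exact ⟨h1 ▸ ha, h2 ▸ hb⟩
      · exact ⟨h2 ▸ hb, h1 ▸ ha⟩
    rcases K.mem_uv p.2 hp'.1 with h1 | h1 <;> rcases K.mem_uv q.2 hp'.2 with h2 | h2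
    · exact hGpq.ne (h1.trans h2.symm)
    · exact K.hnadj (by rw [← h1, ← h2]; exact hGpq)
    · exact K.hnadj (by rw [← h2, ← h1]; exact hGpq.symm)
    · exact hGpq.ne (h1.trans h2.symm)
  have caseSS : ∀ x y : V, x ∈ K.S → y ∈ K.S → x ≠ y →
      ∃ M : (K.G.deleteEdges {Sym2.map Subtype.val s(p, q)}).Subgraph,
        M.IsMatching ∧ M.verts = ({x, y}ᶜ : Set V) := by
    intro x y hx hy hxy
    rcases K.piece_del_strip _ hdel x y hx hy hxy with ⟨M1, hM1, hv1⟩ |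
      ⟨hne4, M1, hM1, hv1⟩
    · obtain ⟨M2, hM2, hv2⟩ := K.symm.piece_two _ hFS' K.u K.v K.hu' K.hv' K.huv (Or.inl rfl)
      have hv2' : M2.verts = K.S' \ {K.u, K.v} := hv2
      obtain ⟨M, hM, hMv, -⟩ := exists_matching_union _ M1 M2 hM1 hM2
        (by rw [hv1, hv2']; exact K.setI1 x y)
      refine ⟨M, hM, ?_⟩
      rw [hMv, hv1, hv2']
      exact K.setU1 hx hy
    · obtain ⟨M2, hM2, hv2⟩ := K.symm.piece_full _ hFS'
      have hv2' : M2.verts = K.S' := hv2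
      obtain ⟨M, hM, hMv, -⟩ := exists_matching_union _ M1 M2 hM1 hM2
        (by rw [hv1, hv2']; exact K.setI2 x y)
      refine ⟨M, hM, ?_⟩
      rw [hMv, hv1, hv2']
      exact K.setU2 hx hy hne4
  have caseS'S' : ∀ x y : V, x ∈ K.S' → y ∈ K.S' → x ≠ y →
      ∃ M : (K.G.deleteEdges {Sym2.map Subtype.val s(p, q)}).Subgraph,
        M.IsMatching ∧ M.verts = ({x, y}ᶜ : Set V) := by
    intro x y hx hy hxy
    rcases K.symm.piece_strip _ hFS' x y hx hy hxy with ⟨M2, hM2, hv2⟩ |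
      ⟨hne4, M2, hM2, hv2⟩
    · have hv2' : M2.verts = K.S' \ {x, y} := hv2
      obtain ⟨M1, hM1, hv1⟩ := K.piece_del_two _ hdel K.u K.v K.hu K.hv K.huv (Or.inl rfl)
      obtain ⟨M, hM, hMv, -⟩ := exists_matching_union _ M2 M1 hM2 hM1
        (by rw [hv1, hv2']; exact K.symm.setI1 x y)
      refine ⟨M, hM, ?_⟩
      rw [hMv, hv1, hv2']
      exact K.symm.setU1 hx hy
    · obtain ⟨M1, hM1, hv1⟩ := K.piece_del_full _ hdel
      obtain ⟨M, hM, hMv, -⟩ := exists_matching_union _ M2 M1 hM2 hM1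
        (by rw [hv1, hv2]; exact K.symm.setI2 x y)
      refine ⟨M, hM, ?_⟩
      rw [hMv, hv1, hv2]
      exact K.symm.setU2 hx hy hne4
  have caseM : ∀ x y : V, x ∈ K.S → x ∉ K.S' → y ∈ K.S' → y ∉ K.S →
      ∃ M : (K.G.deleteEdges {Sym2.map Subtype.val s(p, q)}).Subgraph,
        M.IsMatching ∧ M.verts = ({x, y}ᶜ : Set V) := by
    intro x y hx hxn hy hyn
    have hxu : x ≠ K.u := fun h => hxn (h ▸ K.hu')
    have hvy : K.v ≠ y := fun h => hyn (h ▸ K.hv)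
    obtain ⟨M1, hM1, hv1⟩ := K.piece_del_two _ hdel x K.u hx K.hu (fun h => hxu h)
      (Or.inr (Or.inl rfl))
    obtain ⟨M2, hM2, hv2⟩ := K.symm.piece_two _ hFS' K.v y K.hv' hy hvy
      (Or.inr (Or.inr (Or.inl rfl)))
    have hv2' : M2.verts = K.S' \ {K.v, y} := hv2
    obtain ⟨M, hM, hMv, -⟩ := exists_matching_union _ M1 M2 hM1 hM2
      (by rw [hv1, hv2']; exact K.setIm x y)
    refine ⟨M, hM, ?_⟩
    rw [hMv, hv1, hv2']
    exact K.setUm hx hxn hy hyn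
  refine ⟨K.hbc.1, ?_⟩
  intro x y hxy
  by_cases hxS : x ∈ K.S <;> by_cases hyS : y ∈ K.S
  · exact caseSS x y hxS hyS hxy
  · rcases K.mem_S_or_S' y with h | hyS'
    · exact absurd h hyS
    · by_cases hxS' : x ∈ K.S'
      · exact caseS'S' x y hxS' hyS' hxy
      · exact caseM x y hxS hxS' hyS' hyS
  · rcases K.mem_S_or_S' x with h | hxS'
    · exact absurd h hxS
    · by_cases hyS' : y ∈ K.S'
      · exact caseS'S' x y hxS' hyS' hxy
      · obtain ⟨M, hM, hMv⟩ := caseM y x hyS hyS' hxS' hxS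
        exact ⟨M, hM, by rw [hMv, Set.pair_comm]⟩
  · rcases K.mem_S_or_S' x with h | hxS'
    · exact absurd h hxS
    · rcases K.mem_S_or_S' y with h | hyS'
      · exact absurd h hyS
      · exact caseS'S' x y hxS' hyS' hxy


lemma edge_in_G (K : Setup V) {e : Sym2 K.S} (he : e ∈ K.GS.edgeSet)
    (hene : e ≠ s((⟨K.u, K.hu⟩ : K.S), (⟨K.v, K.hv⟩ : K.S))) :
    Sym2.map Subtype.val e ∈ K.G.edgeSet := by
  have hex : ∃ p q : K.S, e = s(p, q) := by
    induction e using Sym2.ind with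
    | _ p q => exact ⟨p, q, rfl⟩
  obtain ⟨p, q, rfl⟩ := hex
  have hpq : K.GS.Adj p q := by rwa [SimpleGraph.mem_edgeSet] at he
  have hGpq : K.G.Adj ↑p ↑q := by
    rcases (K.GS_adj p q).mp hpq with h | ⟨h1, h2⟩ | ⟨h1, h2⟩
    · exact h
    · exfalso
      apply hene
      rw [show p = (⟨K.u, K.hu⟩ : K.S) from Subtype.ext h1,
        show q = (⟨K.v, K.hv⟩ : K.S) from Subtype.ext h2]
    · exfalso
      apply hene
      rw [show p = (⟨K.v, K.hv⟩ : K.S) from Subtype.ext h1,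
        show q = (⟨K.u, K.hu⟩ : K.S) from Subtype.ext h2, Sym2.eq_swap]
  rw [Sym2.map_pair_eq, SimpleGraph.mem_edgeSet]
  exact hGpq

lemma main [Fintype V] (K : Setup V) :
    Sym2.map (Subtype.val : K.S → V) ''
        (DeletableEdges K.GS \ {s((⟨K.u, K.hu⟩ : K.S), (⟨K.v, K.hv⟩ : K.S))}) =
      DeletableEdges K.G ∩ (Sym2.map (Subtype.val : K.S → V) '' K.GS.edgeSet) := by
  ext f
  simp only [Set.mem_image, Set.mem_inter_iff, Set.mem_diff, Set.mem_singleton_iff,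
    DeletableEdges, Set.mem_setOf_eq]
  constructor
  · rintro ⟨e, ⟨⟨heE, hebc⟩, hene⟩, rfl⟩
    exact ⟨⟨K.edge_in_G heE hene, K.bicritG_del e heE hene hebc⟩, e, heE, rfl⟩
  · rintro ⟨⟨hfE, hfbc⟩, e, heE, rfl⟩
    have hene : e ≠ s((⟨K.u, K.hu⟩ : K.S), (⟨K.v, K.hv⟩ : K.S)) := by
      rintro rfl
      rw [Sym2.map_pair_eq, SimpleGraph.mem_edgeSet] at hfE
      exact K.hnadj hfE
    have hmap : Sym2.map Subtype.val e ≠ s(K.u, K.v) := by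
      intro h
      rw [h, SimpleGraph.mem_edgeSet] at hfE
      exact K.hnadj hfE
    exact ⟨e, ⟨⟨heE, K.bicritGS_del e hmap hfbc⟩, hene⟩, rfl⟩

end Setup


end BicritAux

end BicritProofs

/-- Deletable edges and decomposition along a 2-vertex cut `{u, v}` with `uv ∉ E(G)`:
for `i = 1, 2`, `DE(Gᵢ) \ {uv} = DE(G) ∩ E(Gᵢ)` (edges of `Gᵢ` viewed as edges of `G`
via the inclusion of the vertex subset). -/
theorem deletableEdges_decomposition_nonadj {V : Type*} [Fintype V]
    (G : SimpleGraph V) (S1 S2 : Set V) (u v : V) (huv : u ≠ v)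
    (hbc : Bicritical G) (hcut : IsTwoCut G u v) (hnadj : ¬ G.Adj u v)
    (hcover : S1 ∪ S2 = Set.univ) (hinter : S1 ∩ S2 = {u, v})
    (hu1 : u ∈ S1) (hv1 : v ∈ S1) (hu2 : u ∈ S2) (hv2 : v ∈ S2)
    (hedges : ∀ a b : V, G.Adj a b → (a ∈ S1 ∧ b ∈ S1) ∨ (a ∈ S2 ∧ b ∈ S2))
    (hconn1 : (G.induce S1).Connected) (hconn2 : (G.induce S2).Connected)
    (hcard1 : 2 < Nat.card S1) (hcard2 : 2 < Nat.card S2) :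
    Sym2.map (Subtype.val : S1 → V) ''
        (DeletableEdges (G.induce S1 ⊔ SimpleGraph.edge (⟨u, hu1⟩ : S1) (⟨v, hv1⟩ : S1)) \
          {s((⟨u, hu1⟩ : S1), (⟨v, hv1⟩ : S1))}) =
      DeletableEdges G ∩
        (Sym2.map (Subtype.val : S1 → V) ''
          (G.induce S1 ⊔ SimpleGraph.edge (⟨u, hu1⟩ : S1) (⟨v, hv1⟩ : S1)).edgeSet) ∧
    Sym2.map (Subtype.val : S2 → V) ''
        (DeletableEdges (G.induce S2 ⊔ SimpleGraph.edge (⟨u, hu2⟩ : S2) (⟨v, hv2⟩ : S2)) \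
          {s((⟨u, hu2⟩ : S2), (⟨v, hv2⟩ : S2))}) =
      DeletableEdges G ∩
        (Sym2.map (Subtype.val : S2 → V) ''
          (G.induce S2 ⊔ SimpleGraph.edge (⟨u, hu2⟩ : S2) (⟨v, hv2⟩ : S2)).edgeSet) := by
  exact ⟨BicritAux.Setup.main
      ⟨G, S1, S2, u, v, huv, hbc, hnadj, hcover, hinter, hu1, hv1, hu2, hv2,
        hcard1, hcard2, hedges⟩,
    BicritAux.Setup.main (BicritAux.Setup.symm
      ⟨G, S1, S2, u, v, huv, hbc, hnadj, hcover, hinter, hu1, hv1, hu2, hv2,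
        hcard1, hcard2, hedges⟩)⟩
end
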